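/- arXiv:math/0607177 — 10 statements merged into one kernel-verified Lean document; each statement's English description precedes it below -/
import Mathlib

section
/- Let (R, m) be a Noetherian local ring, let M be a finitely generated R-module and N ⊆ M a submodule. Suppose h₀ is a non-negative integer such that for every m-primary ideal I of R (i.e., every proper ideal I containing some power of m) and every n ≥ h₀ one has IⁿM ∩ N = I^{n−h₀}(I^{h₀}M ∩ N). Then for every ideal I of R (not necessarily m-primary) and every n ≥ h₀ one has IⁿM ∩ N = I^{n−h₀}(I^{h₀}M ∩ N). -/
open IsLocalRing

/-- `(I ⊔ A)^m ≤ I^m ⊔ A` for ideals. -/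
lemma pow_sup_le_aux {R : Type*} [CommRing R] (I A : Ideal R) :
    ∀ m : ℕ, (I ⊔ A) ^ m ≤ I ^ m ⊔ A
  | 0 => by simp
  | (m + 1) => by
    rw [pow_succ]
    calc (I ⊔ A) ^ m * (I ⊔ A) ≤ (I ^ m ⊔ A) * (I ⊔ A) :=
          Ideal.mul_mono (pow_sup_le_aux I A m) le_rfl
      _ ≤ I ^ (m + 1) ⊔ A := by
          rw [Ideal.sup_mul, Ideal.mul_sup, Ideal.mul_sup]
          apply sup_le (sup_le _ _) (sup_le _ _)
          · rw [← pow_succ]; exact le_sup_left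
          · exact le_sup_of_le_right Ideal.mul_le_right
          · exact le_sup_of_le_right Ideal.mul_le_left
          · exact le_sup_of_le_right Ideal.mul_le_right

/-- Artin–Rees (inclusion form), universe-polymorphic via a finite free presentation. -/
lemma artinRees_incl {R : Type*} [CommRing R] [IsNoetherianRing R]
    {M : Type*} [AddCommGroup M] [Module R M] [Module.Finite R M]
    (J : Ideal R) (P : Submodule R M) :
    ∃ c : ℕ, ∀ k : ℕ, c ≤ k → J ^ k • (⊤ : Submodule R M) ⊓ P ≤ J ^ (k - c) • P := by
  obtain ⟨s, π, hπ⟩ := Module.Finite.exists_fin' R M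
  have hrange : LinearMap.range π = ⊤ := LinearMap.range_eq_top.mpr hπ
  obtain ⟨c, hc⟩ := Ideal.exists_pow_inf_eq_pow_smul J (P.comap π)
  refine ⟨c, fun k hk y hy => ?_⟩
  obtain ⟨hy1, hy2⟩ := hy
  have hmap : Submodule.map π (J ^ k • (⊤ : Submodule R (Fin s → R))) =
      J ^ k • (⊤ : Submodule R M) := by
    rw [Submodule.map_smul'', Submodule.map_top, hrange]
  obtain ⟨z, hz, rfl⟩ : ∃ z ∈ J ^ k • (⊤ : Submodule R (Fin s → R)), π z = y := by
    have := hmap ▸ hy1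
    exact this
  have hz2 : z ∈ (P.comap π) := hy2
  have hz3 : z ∈ J ^ (k - c) • ((J ^ c • ⊤) ⊓ P.comap π) := by
    rw [← hc k hk]; exact ⟨hz, hz2⟩
  have hz4 : z ∈ J ^ (k - c) • P.comap π :=
    Submodule.smul_mono le_rfl inf_le_right hz3
  have : π z ∈ Submodule.map π (J ^ (k - c) • P.comap π) := Submodule.mem_map_of_mem hz4
  rwa [Submodule.map_smul'', Submodule.map_comap_eq_of_surjective hπ] at this

/-- Krull-type intersection: if `x ∈ Q ⊔ J^j • N` for all `j` with `J ≠ ⊤`, then `x ∈ Q`. -/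
lemma krull_incl {R : Type*} [CommRing R] [IsNoetherianRing R] [IsLocalRing R]
    {M : Type*} [AddCommGroup M] [Module R M] [Module.Finite R M]
    (Q N : Submodule R M) (x : M)
    (h : ∀ j : ℕ, x ∈ Q ⊔ (maximalIdeal R) ^ j • N) : x ∈ Q := by
  set J : Ideal R := maximalIdeal R with hJ
  have hJtop : J ≠ ⊤ := (maximalIdeal.isMaximal R).ne_top
  obtain ⟨s, π, hπ⟩ := Module.Finite.exists_fin' R M
  obtain ⟨y, rfl⟩ := hπ x
  set Q' : Submodule R (Fin s → R) := Q.comap π with hQ'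
  have key' : ∀ j : ℕ, y ∈ Q' ⊔ J ^ j • (N.comap π) := by
    intro j
    have hmap : Submodule.map π (Q' ⊔ J ^ j • N.comap π) = Q ⊔ J ^ j • N := by
      rw [Submodule.map_sup, Submodule.map_smul'',
        Submodule.map_comap_eq_of_surjective hπ, Submodule.map_comap_eq_of_surjective hπ]
    obtain ⟨z, hz, hzy⟩ : ∃ z ∈ Q' ⊔ J ^ j • N.comap π, π z = π y := by
      have := hmap ▸ (h j)
      exact this
    have hyz : y - z ∈ Q' := by
      simp only [hQ', Submodule.mem_comap, map_sub, hzy, sub_self]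
      exact Q.zero_mem
    have : y = (y - z) + z := by abel
    rw [this]
    exact add_mem (Submodule.mem_sup_left hyz) hz
  have hmem : ∀ j : ℕ, Q'.mkQ y ∈ J ^ j • (⊤ : Submodule R ((Fin s → R) ⧸ Q')) := by
    intro j
    have h3 : Q'.mkQ y ∈ Submodule.map Q'.mkQ (Q' ⊔ J ^ j • N.comap π) :=
      Submodule.mem_map_of_mem (key' j)
    rw [Submodule.map_sup, Submodule.map_smul''] at h3
    have hQbot : Submodule.map Q'.mkQ Q' = ⊥ := by
      ext z
      simp only [Submodule.mem_map, Submodule.mem_bot]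
      constructor
      · rintro ⟨w, hw, rfl⟩
        exact (Submodule.Quotient.mk_eq_zero Q').mpr hw
      · rintro rfl
        exact ⟨0, Q'.zero_mem, map_zero _⟩
    rw [hQbot, bot_sup_eq] at h3
    exact Submodule.smul_mono le_rfl le_top h3
  have hbot := Ideal.iInf_pow_smul_eq_bot_of_isLocalRing
    (M := (Fin s → R) ⧸ Q') J hJtop
  have hzero : Q'.mkQ y = 0 := by
    have : Q'.mkQ y ∈ (⨅ i : ℕ, J ^ i • ⊤ : Submodule R ((Fin s → R) ⧸ Q')) :=
      Submodule.mem_iInf _ |>.mpr hmem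
    rw [hbot] at this
    exact this
  exact (Submodule.Quotient.mk_eq_zero Q').mp hzero

/-- Proposition: if `h₀` is a strong Artin–Rees number for `(N, M)` with respect to the family
of `m`-primary ideals, then it is a strong Artin–Rees number with respect to all ideals. -/
theorem stmt1 (R : Type*) [CommRing R] [IsNoetherianRing R] [IsLocalRing R]
    (M : Type*) [AddCommGroup M] [Module R M] [Module.Finite R M]
    (N : Submodule R M) (h₀ : ℕ)
    (hprimary : ∀ I : Ideal R, I ≠ ⊤ → (∃ k : ℕ, 1 ≤ k ∧ (maximalIdeal R) ^ k ≤ I) →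
      ∀ n : ℕ, h₀ ≤ n →
        I ^ n • (⊤ : Submodule R M) ⊓ N = I ^ (n - h₀) • (I ^ h₀ • (⊤ : Submodule R M) ⊓ N)) :
    ∀ I : Ideal R, ∀ n : ℕ, h₀ ≤ n →
      I ^ n • (⊤ : Submodule R M) ⊓ N = I ^ (n - h₀) • (I ^ h₀ • (⊤ : Submodule R M) ⊓ N) := by
  intro I n hn
  by_cases hI : I = ⊤
  · subst hI
    simp [Ideal.top_pow]
  have hIm : I ≤ maximalIdeal R := le_maximalIdeal hI
  set J : Ideal R := maximalIdeal R with hJ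
  have hJtop : J ≠ ⊤ := (maximalIdeal.isMaximal R).ne_top
  set T : Submodule R M := I ^ h₀ • ⊤ with hT
  set Q : Submodule R M := I ^ (n - h₀) • (T ⊓ N) with hQ
  apply le_antisymm
  · -- hard direction
    obtain ⟨c, hc⟩ := artinRees_incl J (N ⊔ T)
    intro x hx
    have key : ∀ j : ℕ, x ∈ Q ⊔ J ^ j • N := by
      intro j
      set k : ℕ := j + c + 1 with hk
      set K : Ideal R := I ⊔ J ^ k with hK
      have hKJ : K ≤ J := sup_le hIm (Ideal.pow_le_self (by omega))
      have hKtop : K ≠ ⊤ := fun h => hJtop (top_le_iff.mp (h ▸ hKJ))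
      have h1 := hprimary K hKtop ⟨k, by omega, le_sup_right⟩ n hn
      have hxK : x ∈ K ^ (n - h₀) • (K ^ h₀ • (⊤ : Submodule R M) ⊓ N) := by
        rw [← h1]
        exact ⟨Submodule.smul_mono (Ideal.pow_right_mono le_sup_left _) le_rfl hx.1, hx.2⟩
      have hK1 : K ^ (n - h₀) ≤ I ^ (n - h₀) ⊔ J ^ k := pow_sup_le_aux I (J ^ k) _
      have hK2 : K ^ h₀ • (⊤ : Submodule R M) ⊓ N ≤ (T ⊔ J ^ k • ⊤) ⊓ N := by
        apply inf_le_inf_right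
        calc K ^ h₀ • (⊤ : Submodule R M) ≤ (I ^ h₀ ⊔ J ^ k) • ⊤ :=
              Submodule.smul_mono (pow_sup_le_aux I (J ^ k) h₀) le_rfl
          _ = T ⊔ J ^ k • ⊤ := Submodule.sup_smul _ _ _
      have hstep : (T ⊔ J ^ k • ⊤) ⊓ N ≤ (T ⊓ N) ⊔ J ^ (j + 1) • N := by
        rintro y ⟨hy1, hy2⟩
        obtain ⟨t, ht, a, ha, rfl⟩ := Submodule.mem_sup.mp hy1
        have haN : a ∈ J ^ k • (⊤ : Submodule R M) ⊓ (N ⊔ T) := by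
          refine ⟨ha, ?_⟩
          have : a = (t + a) - t := by abel
          rw [this]
          exact sub_mem (Submodule.mem_sup_left hy2) (Submodule.mem_sup_right ht)
        have haN0 : a ∈ J ^ (k - c) • (N ⊔ T) := hc k (by omega) haN
        have haN' : a ∈ J ^ (j + 1) • N ⊔ T := by
          have h2 : J ^ (k - c) • (N ⊔ T) ≤ J ^ (j + 1) • N ⊔ T := by
            calc J ^ (k - c) • (N ⊔ T)
                = J ^ (k - c) • N ⊔ J ^ (k - c) • T := Submodule.smul_sup _ _ _
              _ ≤ J ^ (j + 1) • N ⊔ T := by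
                  have hkc : k - c = j + 1 := by omega
                  rw [hkc]
                  exact sup_le_sup le_rfl Submodule.smul_le_right
          exact h2 haN0
        obtain ⟨b, hb, t', ht', rfl⟩ := Submodule.mem_sup.mp haN'
        have hbN : b ∈ N := Submodule.smul_le_right hb
        have : t + (b + t') - b ∈ T ⊓ N := by
          constructor
          · have : t + (b + t') - b = t + t' := by abel
            rw [this]; exact add_mem ht ht'
          · exact sub_mem hy2 hbN
        have heq : t + (b + t') = b + (t + (b + t') - b) := by abel
        rw [heq]
        exact add_mem (Submodule.mem_sup_right hb) (Submodule.mem_sup_left this)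
      have hx2 : x ∈ (I ^ (n - h₀) ⊔ J ^ k) • ((T ⊓ N) ⊔ J ^ (j + 1) • N) :=
        Submodule.smul_mono hK1 (le_trans hK2 hstep) hxK
      have hfinal : (I ^ (n - h₀) ⊔ J ^ k) • ((T ⊓ N) ⊔ J ^ (j + 1) • N) ≤ Q ⊔ J ^ j • N := by
        rw [Submodule.sup_smul, Submodule.smul_sup]
        apply sup_le (sup_le _ _) _
        · exact le_sup_left
        · refine le_sup_of_le_right ?_
          calc I ^ (n - h₀) • (J ^ (j + 1) • N) ≤ J ^ (j + 1) • N := Submodule.smul_le_right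
            _ ≤ J ^ j • N := Submodule.smul_mono (Ideal.pow_le_pow_right (by omega)) le_rfl
        · refine le_sup_of_le_right ?_
          calc J ^ k • ((T ⊓ N) ⊔ J ^ (j + 1) • N) ≤ J ^ k • N := by
                apply Submodule.smul_mono le_rfl
                exact sup_le inf_le_right Submodule.smul_le_right
            _ ≤ J ^ j • N := Submodule.smul_mono (Ideal.pow_le_pow_right (by omega)) le_rfl
      exact hfinal hx2
    exact krull_incl Q N x key
  · -- easy direction
    refine le_inf ?_ ?_
    · calc Q ≤ I ^ (n - h₀) • T := Submodule.smul_mono le_rfl inf_le_left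
        _ = (I ^ (n - h₀) * I ^ h₀) • (⊤ : Submodule R M) := by rw [hT, smul_smul]
        _ = I ^ n • ⊤ := by rw [← pow_add, Nat.sub_add_cancel hn]
    · calc Q ≤ I ^ (n - h₀) • N := Submodule.smul_mono le_rfl inf_le_right
        _ ≤ N := Submodule.smul_le_right
end

section
/- Let R be a Noetherian commutative ring and R → S a faithfully flat ring homomorphism with S Noetherian. Let M be a finitely generated R-module and N ⊆ M a submodule, and let N_S denote the image of S ⊗_R N in S ⊗_R M. Suppose h is a non-negative integer such that for every ideal I' of S and every n ≥ h one has I'ⁿ(S ⊗_R M) ∩ N_S = I'^{n−h}(I'^h(S ⊗_R M) ∩ N_S). Then for every ideal I of R and every n ≥ h one has IⁿM ∩ N = I^{n−h}(I^hM ∩ N). -/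
open TensorProduct

section Aux

variable {R : Type*} [CommRing R] (S : Type*) [CommRing S] [Algebra R S]
variable {M : Type*} [AddCommGroup M] [Module R M]

lemma aux_range_subtype_baseChange (P : Submodule R M) :
    LinearMap.range (P.subtype.baseChange S) = P.baseChange S := by
  apply le_antisymm
  · rintro _ ⟨x, rfl⟩
    induction x using TensorProduct.induction_on with
    | zero => simp
    | tmul s p =>
        simp only [LinearMap.baseChange_tmul, Submodule.coe_subtype]
        exact Submodule.tmul_mem_baseChange_of_mem s p.2
    | add x y hx hy => rw [map_add]; exact Submodule.add_mem _ hx hy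
  · rw [Submodule.baseChange_eq_span, Submodule.span_le]
    rintro _ ⟨m, hm, rfl⟩
    exact ⟨(1 : S) ⊗ₜ ⟨m, hm⟩, rfl⟩

lemma aux_ker_baseChange [Module.Flat R S] (P : Submodule R M)
    {M' : Type*} [AddCommGroup M'] [Module R M'] (g : M →ₗ[R] M')
    (hg : LinearMap.ker g = P) :
    LinearMap.ker (g.baseChange S) = P.baseChange S := by
  have hex : Function.Exact P.subtype g := by
    rw [LinearMap.exact_iff, hg, Submodule.range_subtype]
  have hex2 := Module.Flat.lTensor_exact S hex
  rw [← aux_range_subtype_baseChange]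
  ext x
  simp only [LinearMap.mem_ker, LinearMap.mem_range]
  have h1 : g.baseChange S x = LinearMap.lTensor S g x := by
    rw [LinearMap.baseChange_eq_ltensor]
  rw [h1, hex2 x]
  constructor
  · rintro ⟨y, rfl⟩
    exact ⟨y, by rw [LinearMap.baseChange_eq_ltensor]⟩
  · rintro ⟨y, rfl⟩
    exact ⟨y, by rw [LinearMap.baseChange_eq_ltensor]⟩

lemma aux_one_tmul_eq_zero [Module.FaithfullyFlat R S] {m : M}
    (hm : (1 : S) ⊗ₜ[R] m = 0) : m = 0 := by
  have hz : (LinearMap.toSpanSingleton R M m) = 0 := by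
    rw [Module.FaithfullyFlat.zero_iff_lTensor_zero R S]
    apply LinearMap.ext
    intro x
    induction x using TensorProduct.induction_on with
    | zero => simp
    | tmul s r =>
        simp only [LinearMap.lTensor_tmul, LinearMap.toSpanSingleton_apply,
          LinearMap.zero_apply]
        calc s ⊗ₜ[R] (r • m) = (r • s) ⊗ₜ[R] m := (TensorProduct.smul_tmul r s m).symm
          _ = (r • s) • ((1 : S) ⊗ₜ[R] m) := by
                rw [TensorProduct.smul_tmul', smul_eq_mul, mul_one]
          _ = 0 := by rw [hm, smul_zero]
    | add x y hx hy =>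
        simp only [map_add, hx, hy, LinearMap.zero_apply, add_zero]
  have := congrArg (fun f : R →ₗ[R] M => f 1) hz
  simpa using this

lemma aux_le_of_baseChange_le [Module.FaithfullyFlat R S] {P Q : Submodule R M}
    (hPQ : P.baseChange S ≤ Q.baseChange S) : P ≤ Q := by
  intro x hx
  have h1 : (1 : S) ⊗ₜ[R] x ∈ Q.baseChange S :=
    hPQ (Submodule.tmul_mem_baseChange_of_mem 1 hx)
  have h2 : (1 : S) ⊗ₜ[R] (Q.mkQ x) = 0 := by
    have hk := aux_ker_baseChange S Q Q.mkQ (Submodule.ker_mkQ Q)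
    have h3 : Q.mkQ.baseChange S ((1 : S) ⊗ₜ[R] x) = 0 := by
      rw [← LinearMap.mem_ker, hk]; exact h1
    simpa using h3
  have h4 := aux_one_tmul_eq_zero S h2
  rw [Submodule.mkQ_apply, Submodule.Quotient.mk_eq_zero] at h4
  exact h4

lemma aux_baseChange_smul (I : Ideal R) (P : Submodule R M) :
    (I • P).baseChange S = (I.map (algebraMap R S)) • (P.baseChange S) := by
  apply le_antisymm
  · rw [Submodule.baseChange_eq_span, Submodule.span_le]
    rintro _ ⟨m, hm, rfl⟩
    simp only [TensorProduct.mk_apply]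
    refine Submodule.smul_induction_on hm (fun r hr n hn => ?_) (fun x y hx hy => ?_)
    · have : (1 : S) ⊗ₜ[R] (r • n) = (algebraMap R S r) • ((1 : S) ⊗ₜ[R] n) := by
        rw [TensorProduct.tmul_smul, algebraMap_smul]
      rw [this]
      exact Submodule.smul_mem_smul (Ideal.mem_map_of_mem _ hr)
        (Submodule.tmul_mem_baseChange_of_mem 1 hn)
    · rw [TensorProduct.tmul_add]
      exact Submodule.add_mem _ hx hy
  · rw [Submodule.smul_le]
    intro s hs x hx
    rw [Ideal.map] at hs
    induction hs using Submodule.span_induction with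
    | mem s hsmem =>
        obtain ⟨r, hr, rfl⟩ := hsmem
        -- inner induction on x ∈ P.baseChange S
        rw [Submodule.baseChange_eq_span] at hx
        induction hx using Submodule.span_induction with
        | mem y hy =>
            obtain ⟨p, hp, rfl⟩ := hy
            simp only [TensorProduct.mk_apply]
            rw [algebraMap_smul, ← TensorProduct.tmul_smul]
            exact Submodule.tmul_mem_baseChange_of_mem 1 (Submodule.smul_mem_smul hr hp)
        | zero => rw [smul_zero]; exact Submodule.zero_mem _
        | add y z _ _ hy hz => rw [smul_add]; exact Submodule.add_mem _ hy hz
        | smul c y _ hy =>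
            rw [smul_comm]
            exact Submodule.smul_mem _ c hy
    | zero => rw [zero_smul]; exact Submodule.zero_mem _
    | add s t _ _ hsx htx => rw [add_smul]; exact Submodule.add_mem _ hsx htx
    | smul c s _ hsx =>
        rw [smul_eq_mul, mul_smul]
        exact Submodule.smul_mem _ c hsx

lemma aux_baseChange_inf [Module.Flat R S] (P Q : Submodule R M) :
    (P ⊓ Q).baseChange S = P.baseChange S ⊓ Q.baseChange S := by
  set g : M →ₗ[R] (M ⧸ P) × (M ⧸ Q) := P.mkQ.prod Q.mkQ with hg
  have hker : LinearMap.ker g = P ⊓ Q := by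
    rw [hg, LinearMap.ker_prod, Submodule.ker_mkQ, Submodule.ker_mkQ]
  have h1 := aux_ker_baseChange S (P ⊓ Q) g hker
  have h2 := aux_ker_baseChange S P P.mkQ (Submodule.ker_mkQ P)
  have h3 := aux_ker_baseChange S Q Q.mkQ (Submodule.ker_mkQ Q)
  rw [← h1, ← h2, ← h3]
  have key : ∀ x : S ⊗[R] M,
      (TensorProduct.prodRight R S S (M ⧸ P) (M ⧸ Q)) (g.baseChange S x)
        = (P.mkQ.baseChange S x, Q.mkQ.baseChange S x) := by
    intro x
    induction x using TensorProduct.induction_on with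
    | zero => simp; rfl
    | tmul s m => simp [hg]
    | add x y hx hy =>
        rw [map_add, map_add, hx, hy, map_add, map_add, Prod.mk_add_mk]
  ext x
  simp only [LinearMap.mem_ker, Submodule.mem_inf]
  constructor
  · intro hx
    have hk := key x
    rw [hx, map_zero] at hk
    constructor
    · have := congrArg Prod.fst hk; simpa using this.symm
    · have := congrArg Prod.snd hk; simpa using this.symm
  · rintro ⟨ha, hb⟩
    have hz : (TensorProduct.prodRight R S S (M ⧸ P) (M ⧸ Q)) (g.baseChange S x) = 0 := by
      rw [key x, ha, hb]; rfl
    exact (map_eq_zero_iff _ (TensorProduct.prodRight R S S (M ⧸ P) (M ⧸ Q)).injective).mp hz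

end Aux

/-- Lemma 2.4: strong Artin–Rees numbers descend along faithfully flat extensions. -/
theorem stmt2 (R : Type*) [CommRing R] [IsNoetherianRing R]
    (S : Type*) [CommRing S] [IsNoetherianRing S] [Algebra R S] [Module.FaithfullyFlat R S]
    (M : Type*) [AddCommGroup M] [Module R M] [Module.Finite R M]
    (N : Submodule R M) (h : ℕ)
    (hS : ∀ I' : Ideal S, ∀ n : ℕ, h ≤ n →
      I' ^ n • (⊤ : Submodule S (S ⊗[R] M)) ⊓ LinearMap.range (N.subtype.baseChange S) =
        I' ^ (n - h) •
          (I' ^ h • (⊤ : Submodule S (S ⊗[R] M)) ⊓ LinearMap.range (N.subtype.baseChange S))) :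
    ∀ I : Ideal R, ∀ n : ℕ, h ≤ n →
      I ^ n • (⊤ : Submodule R M) ⊓ N = I ^ (n - h) • (I ^ h • (⊤ : Submodule R M) ⊓ N) := by
  intro I n hn
  have key := hS (I.map (algebraMap R S)) n hn
  rw [aux_range_subtype_baseChange] at key
  have e1 : ∀ k : ℕ, (I ^ k • ⊤ : Submodule R M).baseChange S
      = (I.map (algebraMap R S)) ^ k • (⊤ : Submodule S (S ⊗[R] M)) := by
    intro k
    rw [aux_baseChange_smul, Submodule.baseChange_top, Ideal.map_pow]
  have lhs : ((I ^ n • ⊤ ⊓ N : Submodule R M)).baseChange S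
      = (I.map (algebraMap R S)) ^ n • (⊤ : Submodule S (S ⊗[R] M)) ⊓ N.baseChange S := by
    rw [aux_baseChange_inf, e1]
  have rhs : ((I ^ (n - h) • (I ^ h • ⊤ ⊓ N) : Submodule R M)).baseChange S
      = (I.map (algebraMap R S)) ^ (n - h) •
          ((I.map (algebraMap R S)) ^ h • (⊤ : Submodule S (S ⊗[R] M)) ⊓ N.baseChange S) := by
    rw [aux_baseChange_smul, Ideal.map_pow, aux_baseChange_inf, e1]
  have heq : ((I ^ n • ⊤ ⊓ N : Submodule R M)).baseChange S
      = ((I ^ (n - h) • (I ^ h • ⊤ ⊓ N) : Submodule R M)).baseChange S := by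
    rw [lhs, rhs, key]
  exact le_antisymm (aux_le_of_baseChange_le S heq.le) (aux_le_of_baseChange_le S heq.ge)
end

section
/- Let (R, m, k) be a Noetherian local ring of Krull dimension one with infinite residue field k, and let r be a positive integer such that for every m-primary ideal I of R there is y ∈ I with Iⁿ = y·I^{n−1} for all n ≥ r. Let M be a finitely generated R-module, N ⊆ M a submodule, and let T = H⁰_m(M/N) be the submodule of M/N consisting of all elements annihilated by some power of m. Then T has finite length ℓ, and h = max{r, ℓ} + ℓ is a strong Artin–Rees number for the pair (N, M): for every ideal I of R and every n ≥ h one has IⁿM ∩ N = I^{n−h}(I^hM ∩ N). -/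
open IsLocalRing

section Aux

variable {R : Type*} [CommRing R]

lemma aux_mul_smul {M : Type*} [AddCommGroup M] [Module R M] (I J : Ideal R)
    (P : Submodule R M) : (I * J) • P = I • (J • P) := by
  rw [← Submodule.smul_assoc]; rfl

lemma aux_span_smul_mem {M : Type*} [AddCommGroup M] [Module R M] {a : R} {P : Submodule R M}
    {x : M} (h : x ∈ Ideal.span {a} • P) : ∃ u ∈ P, x = a • u := by
  refine Submodule.smul_induction_on h ?_ ?_
  · rintro r hr p hp
    rcases Ideal.mem_span_singleton'.mp hr with ⟨b, rfl⟩
    exact ⟨b • p, P.smul_mem b hp, by rw [mul_comm, mul_smul]⟩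
  · rintro x y ⟨u, hu, rfl⟩ ⟨v, hv, rfl⟩
    exact ⟨u + v, P.add_mem hu hv, (smul_add a u v).symm⟩

lemma aux_pow_add_le (I K : Ideal R) : ∀ s : ℕ, (I + K) ^ s ≤ I ^ s + K
  | 0 => by simp [pow_zero]
  | (s + 1) => by
    have h1 : (I + K) ^ (s + 1) ≤ (I ^ s + K) * (I + K) := by
      rw [pow_succ]
      exact Ideal.mul_mono_left (aux_pow_add_le I K s)
    refine h1.trans ?_
    rw [add_mul, mul_add, mul_add]
    refine sup_le (sup_le ?_ ?_) (sup_le ?_ ?_)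
    · rw [← pow_succ]; exact le_sup_left
    · exact le_sup_of_le_right Ideal.mul_le_right
    · exact le_sup_of_le_right Ideal.mul_le_left
    · exact le_sup_of_le_right Ideal.mul_le_right

/-- Universe-polymorphic version of the Artin–Rees lemma. -/
lemma aux_ar [IsNoetherianRing R] {M : Type*} [AddCommGroup M] [Module R M]
    [Module.Finite R M] (I : Ideal R) (N : Submodule R M) :
    ∃ k : ℕ, ∀ n ≥ k, I ^ n • ⊤ ⊓ N = I ^ (n - k) • (I ^ k • ⊤ ⊓ N) := by
  obtain ⟨n0, f, hf⟩ := Module.Finite.exists_fin' R M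
  let e : ((Fin n0 → R) ⧸ LinearMap.ker f) ≃ₗ[R] M := f.quotKerEquivOfSurjective hf
  have hmap_top : Submodule.map e.toLinearMap ⊤ = ⊤ := by
    rw [Submodule.map_top, LinearMap.range_eq_top]
    exact e.surjective
  have hmap_N : Submodule.map e.toLinearMap (N.comap e.toLinearMap) = N :=
    Submodule.map_comap_eq_of_surjective e.surjective N
  obtain ⟨k, hk⟩ := Ideal.exists_pow_inf_eq_pow_smul I (N.comap e.toLinearMap)
  refine ⟨k, fun n hn => ?_⟩
  have hinj : Function.Injective e.toLinearMap := e.injective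
  have := congrArg (Submodule.map e.toLinearMap) (hk n hn)
  simp only [Submodule.map_smul'', Submodule.map_inf e.toLinearMap hinj, hmap_top, hmap_N] at this
  exact this

/-- Universe-polymorphic version of the Krull intersection theorem. -/
lemma aux_krull [IsNoetherianRing R] [IsLocalRing R] {M : Type*} [AddCommGroup M] [Module R M]
    [Module.Finite R M] (I : Ideal R) (hI : I ≠ ⊤) :
    (⨅ i : ℕ, I ^ i • ⊤ : Submodule R M) = ⊥ := by
  obtain ⟨n0, f, hf⟩ := Module.Finite.exists_fin' R M
  let e : ((Fin n0 → R) ⧸ LinearMap.ker f) ≃ₗ[R] M := f.quotKerEquivOfSurjective hf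
  have hmap_top : Submodule.map e.toLinearMap ⊤ = ⊤ := by
    rw [Submodule.map_top, LinearMap.range_eq_top]
    exact e.surjective
  have h' := Ideal.iInf_pow_smul_eq_bot_of_isLocalRing (M := (Fin n0 → R) ⧸ LinearMap.ker f) I hI
  rw [eq_bot_iff]
  intro x hx
  have hmem : e.symm x ∈ (⨅ i : ℕ, I ^ i • ⊤ : Submodule R ((Fin n0 → R) ⧸ LinearMap.ker f)) := by
    rw [Submodule.mem_iInf]
    intro i
    have hx' : x ∈ I ^ i • (⊤ : Submodule R M) := (Submodule.mem_iInf _).mp hx i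
    have : x ∈ Submodule.map e.toLinearMap (I ^ i • ⊤) := by
      rwa [Submodule.map_smul'', hmap_top]
    rcases this with ⟨u, hu, hux⟩
    have : e.symm x = u := by
      simp [← hux]
    rwa [this]
  rw [h'] at hmem
  have : e.symm x = 0 := hmem
  simpa using congrArg e this

/-- A module killed by the maximal ideal is semisimple. -/
lemma aux_semisimple [IsLocalRing R] {M : Type*} [AddCommGroup M] [Module R M]
    (hm : ∀ a ∈ maximalIdeal R, ∀ x : M, a • x = 0) : IsSemisimpleModule R M := by
  apply IsSemisimpleModule.of_sSup_simples_eq_top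
  rw [eq_top_iff]
  intro x _
  by_cases hx : x = 0
  · subst hx; exact Submodule.zero_mem _
  have hatom : IsAtom (Submodule.span R {x}) := by
    constructor
    · simpa [Submodule.span_singleton_eq_bot] using hx
    · intro b hb
      by_contra hbne
      obtain ⟨w, hwb, hw0⟩ := Submodule.exists_mem_ne_zero_of_ne_bot hbne
      rcases Submodule.mem_span_singleton.mp (hb.le hwb) with ⟨a, rfl⟩
      have ha : IsUnit a := by
        by_contra hau
        exact hw0 (hm a ((IsLocalRing.mem_maximalIdeal _).mpr (mem_nonunits_iff.mpr hau)) x)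
      rcases ha with ⟨v, rfl⟩
      have hxb : x ∈ b := by
        have : (v.inv * (v : R)) • x ∈ b := by
          rw [mul_smul]; exact b.smul_mem _ hwb
        simpa [Units.inv_eq_val_inv] using this
      exact hb.ne (le_antisymm hb.le (Submodule.span_le.mpr (by simpa using hxb)))
  have hsimple : IsSimpleModule R ↥(Submodule.span R {x}) :=
    (isSimpleModule_iff_isAtom).mpr hatom
  have hle : Submodule.span R {x} ≤ sSup {m : Submodule R M | IsSimpleModule R ↥m} :=
    le_sSup hsimple
  exact hle (Submodule.mem_span_singleton_self x)

/-- Dévissage: a finite module killed by a power of the maximal ideal is Artinian. -/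
lemma aux_artinian [IsNoetherianRing R] [IsLocalRing R] :
    ∀ (k : ℕ) {M : Type*} [AddCommGroup M] [Module R M] [Module.Finite R M],
    ((maximalIdeal R) ^ k • (⊤ : Submodule R M) = ⊥) → IsArtinian R M := by
  intro k
  induction k with
  | zero =>
    intro M _ _ _ h
    rw [pow_zero, Ideal.one_eq_top, Submodule.top_smul] at h
    have : Subsingleton M := by
      constructor
      intro a b
      have ha : a ∈ (⊥ : Submodule R M) := h ▸ Submodule.mem_top
      have hb : b ∈ (⊥ : Submodule R M) := h ▸ Submodule.mem_top
      rw [Submodule.mem_bot] at ha hb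
      rw [ha, hb]
    exact isArtinian_of_finite
  | succ k ih =>
    intro M _ _ _ h
    set mR := maximalIdeal R with hmR
    set W : Submodule R M := mR • ⊤ with hW
    -- the quotient M ⧸ W is semisimple and finite, hence Artinian
    have hquot : ∀ a ∈ mR, ∀ x : M ⧸ W, a • x = 0 := by
      intro a ha x
      obtain ⟨y, rfl⟩ := Submodule.Quotient.mk_surjective W x
      rw [← Submodule.Quotient.mk_smul, Submodule.Quotient.mk_eq_zero]
      exact Submodule.smul_mem_smul ha Submodule.mem_top
    have : IsSemisimpleModule R (M ⧸ W) := aux_semisimple hquot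
    have hart_quot : IsArtinian R (M ⧸ W) := inferInstance
    -- the submodule W is killed by mR ^ k
    have : IsNoetherian R M := inferInstance
    have hWfin : Module.Finite R ↥W := Module.Finite.iff_fg.mpr (IsNoetherian.noetherian W)
    have hWk : mR ^ k • (⊤ : Submodule R ↥W) = ⊥ := by
      rw [eq_bot_iff]
      refine Submodule.smul_le.mpr ?_
      intro a ha w _
      have hcoe : a • (w : M) ∈ mR ^ (k + 1) • (⊤ : Submodule R M) := by
        have h1 : a • (w : M) ∈ mR ^ k • W := Submodule.smul_mem_smul ha w.2
        have h2 : mR ^ k • W = mR ^ (k + 1) • (⊤ : Submodule R M) := by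
          rw [hW, ← aux_mul_smul, ← pow_succ]
        rwa [h2] at h1
      rw [h] at hcoe
      have : (a • (w : M)) = 0 := hcoe
      rw [Submodule.mem_bot]
      exact Subtype.ext (by simpa using this)
    have hart_W : IsArtinian R ↥W := ih hWk
    exact isArtinian_of_range_eq_ker W.subtype W.mkQ
      (by rw [Submodule.range_subtype, Submodule.ker_mkQ])

/-- A covering pair of submodules: the maximal ideal sends the top one into the bottom one. -/
lemma aux_cov [IsLocalRing R] {M : Type*} [AddCommGroup M] [Module R M]
    {A B : Submodule R M} (h : A ⋖ B) (hBfg : B.FG) : maximalIdeal R • B ≤ A := by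
  have hj : maximalIdeal R ≤ Ideal.jacobson ⊥ :=
    le_of_eq (IsLocalRing.jacobson_eq_maximalIdeal ⊥ bot_ne_top).symm
  rcases h.eq_or_eq (le_sup_left : A ≤ A ⊔ maximalIdeal R • B)
      (sup_le h.lt.le Submodule.smul_le_right) with hC | hC
  · exact le_trans le_sup_right hC.le
  · exact Submodule.smul_le_of_le_smul_of_le_jacobson_bot hBfg hj hC.ge

/-- A composition series from `⊥` to `⊤` of length `ℓ` forces `m ^ ℓ` to kill the module. -/
lemma aux_series [IsLocalRing R] {M : Type*} [AddCommGroup M] [Module R M] [IsNoetherian R M]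
    (s : CompositionSeries (Submodule R M)) (h0 : s.head = ⊥) (h1 : s.last = ⊤) :
    (maximalIdeal R) ^ s.length • (⊤ : Submodule R M) = ⊥ := by
  have claim : ∀ i : ℕ, ∀ hi : i ≤ s.length,
      (maximalIdeal R) ^ i • (⊤ : Submodule R M) ≤ s ⟨s.length - i, by omega⟩ := by
    intro i
    induction i with
    | zero =>
      intro hi
      rw [pow_zero, Ideal.one_eq_top, Submodule.top_smul]
      have hfin : (⟨s.length - 0, by omega⟩ : Fin (s.length + 1)) = Fin.last s.length := by
        ext; simp
      rw [hfin]
      exact le_of_eq h1.symm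
    | succ i ih =>
      intro hi
      have hii : i ≤ s.length := by omega
      have step1 : (maximalIdeal R) ^ (i + 1) • (⊤ : Submodule R M) ≤
          maximalIdeal R • ((maximalIdeal R) ^ i • (⊤ : Submodule R M)) := by
        rw [← aux_mul_smul, ← pow_succ']
      refine step1.trans ?_
      have step2 : maximalIdeal R • ((maximalIdeal R) ^ i • (⊤ : Submodule R M)) ≤
          maximalIdeal R • s ⟨s.length - i, by omega⟩ :=
        Submodule.smul_mono le_rfl (ih hii)
      refine step2.trans ?_
      set j : Fin s.length := ⟨s.length - i - 1, by omega⟩ with hj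
      have hstep := s.step j
      have hsucc : j.succ = (⟨s.length - i, by omega⟩ : Fin (s.length + 1)) := by
        ext; simp [hj]; omega
      have hcast : j.castSucc = (⟨s.length - (i + 1), by omega⟩ : Fin (s.length + 1)) := by
        ext; simp [hj]; omega
      rw [hsucc, hcast] at hstep
      exact aux_cov hstep (IsNoetherian.noetherian _)
  have := claim s.length le_rfl
  have hhead : s ⟨s.length - s.length, by omega⟩ = s.head := by
    congr 1
    simp
  rw [hhead, h0] at this
  exact le_bot_iff.mp this

end Aux

/-- Theorem 2.7 (second part): explicit Artin–Rees number for a pair `(N, M)` over a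
one-dimensional Noetherian local ring with infinite residue field.  Here
`T = H⁰_m(M/N)` is the `m`-power torsion submodule of `M/N`; it has finite length `ℓ`
(witnessed by a composition series of length `ℓ`), and `h = max r ℓ + ℓ` is a strong
Artin–Rees number for `(N, M)`. -/
theorem stmt5 (R : Type*) [CommRing R] [IsNoetherianRing R] [IsLocalRing R]
    [Infinite (ResidueField R)] (hdim : ringKrullDim R = 1)
    (r : ℕ) (hr : 0 < r)
    (hrprop : ∀ I : Ideal R, I ≠ ⊤ → (∃ k : ℕ, 1 ≤ k ∧ (maximalIdeal R) ^ k ≤ I) →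
      ∃ y ∈ I, ∀ n : ℕ, r ≤ n → I ^ n = Ideal.span {y} * I ^ (n - 1))
    (M : Type*) [AddCommGroup M] [Module R M] [Module.Finite R M] (N : Submodule R M)
    (T : Submodule R (M ⧸ N))
    (hT : T = ⨆ k : ℕ, Submodule.torsionBySet R (M ⧸ N) ((maximalIdeal R ^ k : Ideal R) : Set R)) :
    ∃ ℓ : ℕ,
      (∃ s : CompositionSeries (Submodule R ↥T), s.head = ⊥ ∧ s.last = ⊤ ∧ s.length = ℓ) ∧
      ∀ I : Ideal R, ∀ n : ℕ, max r ℓ + ℓ ≤ n →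
        I ^ n • (⊤ : Submodule R M) ⊓ N =
          I ^ (n - (max r ℓ + ℓ)) • (I ^ (max r ℓ + ℓ) • (⊤ : Submodule R M) ⊓ N) := by
  classical
  set mR := maximalIdeal R with hmR
  have hm_ne : mR ≠ ⊤ := (IsLocalRing.maximalIdeal.isMaximal R).ne_top
  -- T is finitely generated
  have hTfg : T.FG := IsNoetherian.noetherian T
  -- T is killed by a power of mR
  have hTkill : ∃ K : ℕ, ∀ a ∈ mR ^ K, ∀ x ∈ T, a • x = 0 := by
    set p : ℕ → Submodule R (M ⧸ N) :=
      fun k => Submodule.torsionBySet R (M ⧸ N) ((mR ^ k : Ideal R) : Set R) with hp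
    have hmono : Monotone p := by
      intro k k' hkk'
      exact Submodule.torsionBySet_le_torsionBySet_of_subset (Ideal.pow_le_pow_right hkk')
    obtain ⟨S, hS⟩ := hTfg
    have hgen : ∀ g ∈ (S : Set (M ⧸ N)), ∃ k, g ∈ p k := by
      intro g hg
      have : g ∈ ⨆ k, p k := by
        rw [← hT]
        exact hS ▸ Submodule.subset_span hg
      exact (Submodule.mem_iSup_of_directed _ hmono.directed_le).mp this
    choose kk hkk using hgen
    refine ⟨S.attach.sup (fun g => kk g.1 g.2), ?_⟩
    intro a ha x hx
    have hTle : T ≤ p (S.attach.sup (fun g => kk g.1 g.2)) := by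
      rw [← hS]
      rw [Submodule.span_le]
      intro g hg
      exact hmono (Finset.le_sup (Finset.mem_attach S ⟨g, hg⟩)) (hkk g hg)
    exact (Submodule.mem_torsionBySet_iff _ _).mp (hTle hx) ⟨a, ha⟩
  obtain ⟨K, hK⟩ := hTkill
  -- T is Noetherian and Artinian, so it has a composition series
  have hTfin : Module.Finite R ↥T := Module.Finite.iff_fg.mpr hTfg
  have hTkill' : mR ^ K • (⊤ : Submodule R ↥T) = ⊥ := by
    rw [eq_bot_iff]
    refine Submodule.smul_le.mpr ?_
    intro a ha x _
    rw [Submodule.mem_bot]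
    exact Subtype.ext (by simpa using hK a ha x.1 x.2)
  have hTart : IsArtinian R ↥T := aux_artinian K hTkill'
  obtain ⟨s, hs0, hs1⟩ := exists_compositionSeries_of_isNoetherian_isArtinian R ↥T
  set ℓ := s.length with hℓ
  -- mR ^ ℓ kills T
  have hℓkill : ∀ a ∈ mR ^ ℓ, ∀ x ∈ T, a • x = 0 := by
    have := aux_series s hs0 hs1
    intro a ha x hx
    have hmem : a • (⟨x, hx⟩ : ↥T) ∈ mR ^ ℓ • (⊤ : Submodule R ↥T) :=
      Submodule.smul_mem_smul ha Submodule.mem_top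
    rw [this] at hmem
    have : a • (⟨x, hx⟩ : ↥T) = 0 := hmem
    simpa using congrArg Subtype.val this
  refine ⟨ℓ, ⟨s, hs0, hs1, rfl⟩, ?_⟩
  suffices main : ∀ t : ℕ, r ≤ t → ℓ ≤ t → ∀ I : Ideal R, ∀ n : ℕ, t + ℓ ≤ n →
      I ^ n • (⊤ : Submodule R M) ⊓ N =
        I ^ (n - (t + ℓ)) • (I ^ (t + ℓ) • (⊤ : Submodule R M) ⊓ N) by
    intro I n hn
    exact main (max r ℓ) (le_max_left _ _) (le_max_right _ _) I n hn
  intro t hrt hℓt I n hn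
  -- the preimage W of T in M
  set W : Submodule R M := T.comap N.mkQ with hWdef
  have hNW : N ≤ W := by
    intro x hx
    show N.mkQ x ∈ T
    rw [Submodule.mkQ_apply, Submodule.Quotient.mk_eq_zero _ |>.mpr hx]
    exact Submodule.zero_mem T
  have hWN : ∀ a ∈ mR ^ ℓ, ∀ w ∈ W, a • w ∈ N := by
    intro a ha w hw
    have : N.mkQ (a • w) = 0 := by
      rw [map_smul]
      exact hℓkill a ha _ hw
    rwa [Submodule.mkQ_apply, Submodule.Quotient.mk_eq_zero] at this
  -- easy inclusion
  have easy : I ^ (n - (t + ℓ)) • (I ^ (t + ℓ) • ⊤ ⊓ N) ≤ I ^ n • (⊤ : Submodule R M) ⊓ N := by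
    refine le_inf ?_ ?_
    · refine le_trans (Submodule.smul_mono le_rfl inf_le_left) ?_
      rw [← aux_mul_smul, ← pow_add]
      have : n - (t + ℓ) + (t + ℓ) = n := by omega
      rw [this]
    · exact le_trans (Submodule.smul_mono le_rfl inf_le_right) Submodule.smul_le_right
  -- key lemma: the m-primary case
  have key : ∀ J : Ideal R, J ≤ mR → (∃ k : ℕ, 1 ≤ k ∧ mR ^ k ≤ J) →
      J ^ n • (⊤ : Submodule R M) ⊓ N ≤ J ^ (n - (t + ℓ)) • (J ^ (t + ℓ) • ⊤ ⊓ N) := by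
    intro J hJm hJprim
    have hJne : J ≠ ⊤ := fun hJt => hm_ne (top_le_iff.mp (hJt ▸ hJm))
    obtain ⟨y, hyJ, hy⟩ := hrprop J hJne hJprim
    obtain ⟨k0, hk01, hk0J⟩ := hJprim
    have hyc : mR ^ (k0 * r) ≤ Ideal.span {y} := by
      rw [pow_mul]
      refine le_trans (Ideal.pow_right_mono hk0J r) ?_
      rw [hy r le_rfl]
      exact Ideal.mul_le_left
    -- powers of J are eventually multiples of y
    have hpow : ∀ d : ℕ, J ^ (t + d) = Ideal.span {y} ^ d * J ^ t := by
      intro d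
      induction d with
      | zero => simp
      | succ d ih =>
        have h1 : J ^ (t + (d + 1)) = Ideal.span {y} * J ^ (t + d) := by
          have := hy (t + (d + 1)) (by omega)
          simpa [Nat.add_sub_cancel, show t + (d + 1) - 1 = t + d by omega] using this
        rw [h1, ih, ← mul_assoc, ← pow_succ']
    intro x hx
    obtain ⟨hx1, hxN⟩ := hx
    obtain ⟨e, he⟩ : ∃ e, e = n - t := ⟨_, rfl⟩
    have het : t + e = n := by omega
    have heℓ : ℓ ≤ e := by omega
    have hJn : J ^ n = Ideal.span {y ^ e} * J ^ t := by
      rw [← het, hpow e, Ideal.span_singleton_pow]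
    rw [hJn, aux_mul_smul] at hx1
    obtain ⟨u, hu, rfl⟩ := aux_span_smul_mem hx1
    -- u lies in W
    have huW : u ∈ W := by
      show N.mkQ u ∈ T
      rw [hT]
      refine le_iSup (fun k => Submodule.torsionBySet R (M ⧸ N) ((mR ^ k : Ideal R) : Set R))
        (k0 * r * e) ?_
      rw [Submodule.mem_torsionBySet_iff]
      rintro ⟨a, ha⟩
      have hae : a ∈ Ideal.span {y ^ e} := by
        have : mR ^ (k0 * r * e) ≤ Ideal.span {y ^ e} := by
          rw [pow_mul, ← Ideal.span_singleton_pow]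
          exact Ideal.pow_right_mono hyc e
        exact this ha
      rcases Ideal.mem_span_singleton'.mp hae with ⟨b, rfl⟩
      show (b * y ^ e) • N.mkQ u = 0
      rw [mul_smul, ← map_smul]
      have : N.mkQ (y ^ e • u) = 0 := by
        rw [Submodule.mkQ_apply, Submodule.Quotient.mk_eq_zero]
        exact hxN
      rw [this, smul_zero]
    -- y ^ ℓ • u belongs to J ^ (t + ℓ) • ⊤ ⊓ N
    have hyu : y ^ ℓ • u ∈ J ^ (t + ℓ) • (⊤ : Submodule R M) ⊓ N := by
      constructor
      · have h1 : y ^ ℓ • u ∈ J ^ ℓ • (J ^ t • (⊤ : Submodule R M)) :=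
          Submodule.smul_mem_smul (Ideal.pow_mem_pow hyJ ℓ) hu
        have h2 : J ^ ℓ • (J ^ t • (⊤ : Submodule R M)) = J ^ (t + ℓ) • ⊤ := by
          rw [← aux_mul_smul, ← pow_add]
          congr 2
          omega
        rwa [h2] at h1
      · exact hWN (y ^ ℓ) (Ideal.pow_mem_pow (hJm hyJ) ℓ) u huW
    -- conclude
    have hxsplit : y ^ e • u = y ^ (n - (t + ℓ)) • (y ^ ℓ • u) := by
      have hee : e = n - (t + ℓ) + ℓ := by omega
      rw [← mul_smul, ← pow_add, hee]
    rw [hxsplit]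
    exact Submodule.smul_mem_smul (Ideal.pow_mem_pow hyJ (n - (t + ℓ))) hyu
  -- main case split
  by_cases hI : I = ⊤
  · subst hI
    simp [Ideal.top_pow, Submodule.top_smul]
  · have hIm : I ≤ mR := IsLocalRing.le_maximalIdeal hI
    refine le_antisymm ?_ easy
    intro x hx
    obtain ⟨hx1, hxN⟩ := hx
    set B : Submodule R M := I ^ (n - (t + ℓ)) • (I ^ (t + ℓ) • ⊤ ⊓ N) with hB
    -- Artin-Rees constant for the pair (N ⊔ I ^ (t + ℓ) • ⊤, M) with respect to mR
    obtain ⟨c, hc⟩ := aux_ar mR (N ⊔ I ^ (t + ℓ) • (⊤ : Submodule R M))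
    -- x is in B up to arbitrarily mR-deep elements
    have hBt : ∀ t0 : ℕ, x ∈ B ⊔ mR ^ t0 • (⊤ : Submodule R M) := by
      intro t0
      obtain ⟨t', ht'⟩ : ∃ u, u = t0 + c + 1 := ⟨_, rfl⟩
      set J : Ideal R := I + mR ^ t' with hJdef
      have hJm : J ≤ mR := sup_le hIm (le_trans (Ideal.pow_le_self (by omega)) le_rfl)
      have hJx : x ∈ J ^ n • (⊤ : Submodule R M) ⊓ N := by
        constructor
        · exact Submodule.smul_mono_left (Ideal.pow_right_mono le_sup_left n) hx1
        · exact hxN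
      have hJB := key J hJm ⟨t', by omega, le_sup_right⟩ hJx
      -- now push J-powers down to I-powers modulo mR-deep terms
      have hD1 : J ^ (t + ℓ) • (⊤ : Submodule R M) ⊓ N ≤
          (I ^ (t + ℓ) • ⊤ ⊓ N) ⊔ mR ^ (t' - c) • N := by
        intro w hw
        obtain ⟨hw1, hwN⟩ := hw
        have hw2 : w ∈ I ^ (t + ℓ) • (⊤ : Submodule R M) ⊔ mR ^ t' • ⊤ := by
          have hle : J ^ (t + ℓ) • (⊤ : Submodule R M) ≤ (I ^ (t + ℓ) + mR ^ t') • ⊤ :=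
            Submodule.smul_mono_left (aux_pow_add_le I (mR ^ t') (t + ℓ))
          have := hle hw1
          rwa [Submodule.add_eq_sup, Submodule.sup_smul] at this
        rcases Submodule.mem_sup.mp hw2 with ⟨p, hp, q, hq, hpq⟩
        have hqmem : q ∈ mR ^ t' • (⊤ : Submodule R M) ⊓ (N ⊔ I ^ (t + ℓ) • ⊤) := by
          constructor
          · exact hq
          · have : q = w - p := by rw [← hpq]; abel
            rw [this]
            exact Submodule.sub_mem _ (Submodule.mem_sup_left hwN) (Submodule.mem_sup_right hp)
        rw [hc t' (by omega)] at hqmem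
        have hqmem2 : q ∈ mR ^ (t' - c) • N ⊔ I ^ (t + ℓ) • (⊤ : Submodule R M) := by
          have hle : mR ^ (t' - c) • (mR ^ c • (⊤ : Submodule R M) ⊓ (N ⊔ I ^ (t + ℓ) • ⊤)) ≤
              mR ^ (t' - c) • (N ⊔ I ^ (t + ℓ) • (⊤ : Submodule R M)) :=
            Submodule.smul_mono le_rfl inf_le_right
          have hmm := hle hqmem
          rw [Submodule.smul_sup] at hmm
          exact (show _ ≤ mR ^ (t' - c) • N ⊔ I ^ (t + ℓ) • (⊤ : Submodule R M) from
            sup_le_sup_left Submodule.smul_le_right _) hmm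
        rcases Submodule.mem_sup.mp hqmem2 with ⟨q1, hq1, q2, hq2, hq12⟩
        have hwq1 : w - q1 ∈ I ^ (t + ℓ) • (⊤ : Submodule R M) ⊓ N := by
          constructor
          · have : w - q1 = p + q2 := by
              rw [← hpq, ← hq12]; abel
            rw [this]
            exact Submodule.add_mem _ hp hq2
          · exact Submodule.sub_mem _ hwN (Submodule.smul_le_right hq1)
        have : w = (w - q1) + q1 := by abel
        rw [this]
        exact Submodule.add_mem _ (Submodule.mem_sup_left hwq1) (Submodule.mem_sup_right hq1)
      -- assemble
      have hfin : J ^ (n - (t + ℓ)) • (J ^ (t + ℓ) • (⊤ : Submodule R M) ⊓ N) ≤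
          B ⊔ mR ^ t0 • (⊤ : Submodule R M) := by
        refine le_trans (Submodule.smul_mono_left (aux_pow_add_le I (mR ^ t') (n - (t + ℓ)))) ?_
        rw [Submodule.add_eq_sup, Submodule.sup_smul]
        refine sup_le ?_ ?_
        · refine le_trans (Submodule.smul_mono le_rfl hD1) ?_
          rw [Submodule.smul_sup]
          refine sup_le ?_ ?_
          · exact le_sup_left
          · refine le_sup_of_le_right ?_
            rw [← aux_mul_smul, mul_comm, aux_mul_smul]
            refine le_trans (Submodule.smul_mono le_rfl Submodule.smul_le_right) ?_
            refine le_trans (Submodule.smul_mono_left (Ideal.pow_le_pow_right (show t0 ≤ t' - c by omega))) ?_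
            exact Submodule.smul_mono le_rfl le_top
        · refine le_sup_of_le_right ?_
          exact Submodule.smul_mono (Ideal.pow_le_pow_right (show t0 ≤ t' by omega)) le_top
      exact hfin hJB
    -- conclude by Krull intersection in M ⧸ B
    have hBN : B ≤ N := le_trans (Submodule.smul_mono le_rfl inf_le_right) Submodule.smul_le_right
    have hK := aux_krull (M := M ⧸ B) mR hm_ne
    have hximg : B.mkQ x ∈ (⨅ i : ℕ, mR ^ i • ⊤ : Submodule R (M ⧸ B)) := by
      rw [Submodule.mem_iInf]
      intro i
      rcases Submodule.mem_sup.mp (hBt i) with ⟨b, hb, z, hz, hbz⟩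
      have hmapz : B.mkQ z ∈ mR ^ i • (⊤ : Submodule R (M ⧸ B)) := by
        have hmap : Submodule.map B.mkQ (mR ^ i • (⊤ : Submodule R M)) =
            mR ^ i • (⊤ : Submodule R (M ⧸ B)) := by
          rw [Submodule.map_smul'', Submodule.map_top, Submodule.range_mkQ]
        exact hmap ▸ Submodule.mem_map_of_mem hz
      have : B.mkQ x = B.mkQ z := by
        rw [← hbz, map_add]
        have : B.mkQ b = 0 := by
          rw [Submodule.mkQ_apply, Submodule.Quotient.mk_eq_zero]
          exact hb
        rw [this, zero_add]
      rwa [this]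
    rw [hK] at hximg
    have : B.mkQ x = 0 := hximg
    rwa [Submodule.mkQ_apply, Submodule.Quotient.mk_eq_zero] at this
end

section
/- Let (R, m) be a Noetherian local ring, M a finitely generated R-module, and N ⊆ M a submodule. Let I be an ideal of R, r ≥ 1 an integer, and y ∈ I an element such that Iⁿ = y·I^{n−1} for all n ≥ r, and such that y is a non-zerodivisor on M/N (i.e., for x ∈ M, y·x ∈ N implies x ∈ N). Then for every n ≥ r one has IⁿM ∩ N = I^{n−r}(I^rM ∩ N). -/
/-!
Induction on `n`: since `I^{n+1}M = y·IⁿM` and `y` is regular on `M/N`, an element of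
`y·IⁿM ∩ N` is `y` times an element of `IⁿM ∩ N`, so `I^{n+1}M ∩ N = y(IⁿM ∩ N)`, and `y ∈ I`
moves this into `I^{n+1-r}(I^rM ∩ N)`. The reverse inclusion holds for any submodule `N`.
-/

open scoped Pointwise

namespace Submodule

variable {R M : Type*} [CommRing R] [AddCommGroup M] [Module R M]

theorem smul_smul_inf_le_mul_smul_inf (J K : Ideal R) (P N : Submodule R M) :
    J • (K • P ⊓ N) ≤ (J * K) • P ⊓ N :=
  le_inf (mul_smul J K P ▸ smul_mono_right J inf_le_left)
    ((smul_mono_right J inf_le_right).trans smul_le_right)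

theorem pointwise_smul_inf_eq_of_smul_mem {y : R} {N : Submodule R M}
    (hreg : ∀ x : M, y • x ∈ N → x ∈ N) (P : Submodule R M) :
    y • P ⊓ N = y • (P ⊓ N) := by
  refine le_antisymm ?_ (le_inf (smul_le_smul_left y inf_le_left) ?_)
  · rintro _ ⟨hx, hxN⟩
    obtain ⟨z, hz, rfl⟩ := (mem_smul_pointwise_iff_exists _ _ _).mp hx
    exact (mem_smul_pointwise_iff_exists _ _ _).mpr ⟨z, ⟨hz, hreg z hxN⟩, rfl⟩
  · rw [← ideal_span_singleton_smul]
    exact smul_le_right.trans inf_le_right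

theorem pointwise_smul_smul_le_mul_smul {y : R} {I : Ideal R} (hyI : y ∈ I) (J : Ideal R)
    (Q : Submodule R M) : y • (J • Q) ≤ (I * J) • Q := by
  rw [← ideal_span_singleton_smul, ← mul_smul]
  exact smul_mono_left (Ideal.mul_mono_left ((Ideal.span_singleton_le_iff_mem I).mpr hyI))

end Submodule

open Submodule in
theorem stmt6_general (R : Type*) [CommRing R]
    (M : Type*) [AddCommGroup M] [Module R M] (N : Submodule R M)
    (I : Ideal R) (r : ℕ) (y : R) (hyI : y ∈ I)
    (hy : ∀ n : ℕ, r ≤ n → I ^ n = Ideal.span {y} * I ^ (n - 1))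
    (hreg : ∀ x : M, y • x ∈ N → x ∈ N) :
    ∀ n : ℕ, r ≤ n →
      I ^ n • (⊤ : Submodule R M) ⊓ N = I ^ (n - r) • (I ^ r • (⊤ : Submodule R M) ⊓ N) := by
  intro n hn
  refine le_antisymm ?_ ?_
  · induction n, hn using Nat.le_induction with
    | base => simp
    | succ n hn ih =>
      calc I ^ (n + 1) • ⊤ ⊓ N = y • (I ^ n • ⊤ ⊓ N) := by
            rw [hy (n + 1) (by omega), Nat.add_sub_cancel, mul_smul, ideal_span_singleton_smul,
              pointwise_smul_inf_eq_of_smul_mem hreg]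
        _ ≤ y • (I ^ (n - r) • (I ^ r • ⊤ ⊓ N)) := smul_le_smul_left y ih
        _ ≤ (I * I ^ (n - r)) • (I ^ r • ⊤ ⊓ N) := pointwise_smul_smul_le_mul_smul hyI _ _
        _ = I ^ (n + 1 - r) • (I ^ r • ⊤ ⊓ N) := by rw [← pow_succ', Nat.sub_add_comm hn]
  · simpa [← pow_add, Nat.sub_add_cancel hn] using
      smul_smul_inf_le_mul_smul_inf (I ^ (n - r)) (I ^ r) ⊤ N

/-- The Cohen–Macaulay step in Theorem 2.7: if `y ∈ I` satisfies `Iⁿ = y·I^{n-1}` for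
`n ≥ r` and `y` is a non-zerodivisor on `M/N`, then `IⁿM ∩ N = I^{n-r}(I^rM ∩ N)` for
all `n ≥ r`. -/
theorem stmt6 (R : Type*) [CommRing R] [IsNoetherianRing R] [IsLocalRing R]
    (M : Type*) [AddCommGroup M] [Module R M] [Module.Finite R M] (N : Submodule R M)
    (I : Ideal R) (r : ℕ) (hr : 1 ≤ r) (y : R) (hyI : y ∈ I)
    (hy : ∀ n : ℕ, r ≤ n → I ^ n = Ideal.span {y} * I ^ (n - 1))
    (hreg : ∀ x : M, y • x ∈ N → x ∈ N) :
    ∀ n : ℕ, r ≤ n →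
      I ^ n • (⊤ : Submodule R M) ⊓ N = I ^ (n - r) • (I ^ r • (⊤ : Submodule R M) ⊓ N) :=
  stmt6_general R M N I r y hyI hy hreg
end

section
/- Let (R, m) be a Noetherian local ring, J an ideal of R, and write R̄ = R/J. Let x₁, …, x_m ∈ R and let I = (x₁, …, x_m) be the ideal they generate. Let h ≥ 1 and suppose that the relation type of the ideal IR̄ is at most h; that is, the kernel L of the graded R̄-algebra homomorphism from the polynomial ring R̄[X₁, …, X_m] (with each Xᵢ of degree 1) onto the Rees algebra R̄[IR̄·t] ⊆ R̄[t] sending Xᵢ to x̄ᵢt is generated, as an ideal, by homogeneous elements of degree at most h. Then for every n > h one has Iⁿ ∩ J = I^{n−h}(I^h ∩ J). -/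
open MvPolynomial

namespace Stmt7Aux

lemma degCast {σ : Type*} [Fintype σ] (d : σ →₀ ℕ) : d.degree = ∑ i, d i := by
  rw [Finsupp.degree]
  exact Finset.sum_subset (Finset.subset_univ _)
    (fun i _ hi => Finsupp.notMem_support_iff.mp hi)

lemma homogDeg {σ S : Type*} [CommRing S] {φ : MvPolynomial σ S} {n : ℕ}
    (hφ : φ.IsHomogeneous n) {d : σ →₀ ℕ} (hd : MvPolynomial.coeff d φ ≠ 0) :
    d.degree = n := by
  rw [Finsupp.degree_eq_weight_one]; exact hφ hd

variable {m : ℕ} {R : Type*} [CommRing R]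

lemma prod_pow_mem (x : Fin m → R) (d : Fin m →₀ ℕ) :
    (∏ i, x i ^ d i) ∈ (Ideal.span (Set.range x)) ^ d.degree := by
  have h1 : ∏ i, x i ^ d i ∈ ∏ i, (Ideal.span (Set.range x)) ^ (d i) :=
    Ideal.prod_mem_prod fun i _ => Ideal.pow_mem_pow (Ideal.subset_span (Set.mem_range_self i)) _
  rwa [Finset.prod_pow_eq_pow_sum, ← degCast] at h1

lemma eval_mem_pow (x : Fin m → R) {n : ℕ} {F : MvPolynomial (Fin m) R}
    (hF : F.IsHomogeneous n) : MvPolynomial.eval x F ∈ (Ideal.span (Set.range x)) ^ n := by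
  rw [MvPolynomial.eval_eq']
  refine Ideal.sum_mem _ fun d hd => Ideal.mul_mem_left _ _ ?_
  have := prod_pow_mem x d
  rwa [homogDeg hF (MvPolynomial.mem_support_iff.mp hd)] at this

lemma exists_homog_rep (x : Fin m → R) :
    ∀ (n : ℕ) (a : R), a ∈ (Ideal.span (Set.range x)) ^ n →
      ∃ F : MvPolynomial (Fin m) R, F.IsHomogeneous n ∧ MvPolynomial.eval x F = a := by
  intro n
  induction n with
  | zero =>
    intro a _
    exact ⟨MvPolynomial.C a, MvPolynomial.isHomogeneous_C _ _, by simp⟩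
  | succ k ih =>
    intro a ha
    rw [pow_succ] at ha
    refine Submodule.mul_induction_on ha ?_ ?_
    · intro r hr s hs
      obtain ⟨F, hF, hFe⟩ := ih r hr
      obtain ⟨c, hc⟩ := Ideal.mem_span_range_iff_exists_fun.mp hs
      refine ⟨F * ∑ i, MvPolynomial.C (c i) * MvPolynomial.X i,
        hF.mul (MvPolynomial.IsHomogeneous.sum _ _ _
          fun i _ => MvPolynomial.isHomogeneous_C_mul_X _ _), ?_⟩
      simp [hFe, ← hc]
    · rintro p q ⟨F, hF, hFe⟩ ⟨G, hG, hGe⟩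
      exact ⟨F + G, hF.add hG, by simp [hFe, hGe]⟩

lemma hc_map {σ S T : Type*} [CommRing S] [CommRing T] (f : S →+* T)
    (n : ℕ) (p : MvPolynomial σ S) :
    MvPolynomial.homogeneousComponent n (MvPolynomial.map f p)
      = MvPolynomial.map f (MvPolynomial.homogeneousComponent n p) := by
  ext d
  simp only [MvPolynomial.coeff_homogeneousComponent, MvPolynomial.coeff_map, apply_ite f,
    map_zero]

lemma hc_mul_homog {σ S : Type*} [CommRing S] {g : MvPolynomial σ S} {d : ℕ}
    (hg : g.IsHomogeneous d) (p : MvPolynomial σ S) (e : ℕ) :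
    MvPolynomial.homogeneousComponent (e + d) (p * g)
      = MvPolynomial.homogeneousComponent e p * g := by
  conv_lhs => rw [← MvPolynomial.sum_homogeneousComponent p, Finset.sum_mul, map_sum]
  have key : ∀ i : ℕ,
      MvPolynomial.homogeneousComponent (e + d)
          (MvPolynomial.homogeneousComponent i p * g)
        = if i = e then MvPolynomial.homogeneousComponent i p * g else 0 := by
    intro i
    have hmem : MvPolynomial.homogeneousComponent i p * g
        ∈ MvPolynomial.homogeneousSubmodule σ S (i + d) :=
      (MvPolynomial.mem_homogeneousSubmodule _ _).mpr
        ((MvPolynomial.homogeneousComponent_isHomogeneous i p).mul hg)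
    rcases eq_or_ne i e with rfl | hie
    · rw [MvPolynomial.homogeneousComponent_of_mem hmem, if_pos rfl, if_pos rfl]
    · rw [MvPolynomial.homogeneousComponent_of_mem hmem, if_neg (by omega), if_neg hie]
  rw [Finset.sum_congr rfl fun i _ => key i, Finset.sum_ite_eq' (Finset.range _) e _]
  split
  · rfl
  · next he =>
      rw [Finset.mem_range, not_lt] at he
      rw [MvPolynomial.homogeneousComponent_eq_zero _ _ (by omega), zero_mul]

lemma homog_aeval_CX {S : Type*} [CommRing S] {n : ℕ} {p : MvPolynomial (Fin m) S}
    (hp : p.IsHomogeneous n) (y : Fin m → S) :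
    MvPolynomial.aeval (fun i => Polynomial.C (y i) * Polynomial.X) p
      = Polynomial.C (MvPolynomial.eval y p) * Polynomial.X ^ n := by
  rw [MvPolynomial.aeval_def, MvPolynomial.eval₂_eq', MvPolynomial.eval_eq', map_sum,
    Finset.sum_mul]
  refine Finset.sum_congr rfl fun d hd => ?_
  have hdeg : ∑ i, d i = n := by
    rw [← degCast]; exact homogDeg hp (MvPolynomial.mem_support_iff.mp hd)
  simp only [mul_pow, Finset.prod_mul_distrib, ← map_pow, ← map_prod,
    Finset.prod_pow_eq_pow_sum, hdeg, Polynomial.algebraMap_eq, map_mul]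
  ring

lemma exists_homog_lift {σ S T : Type*} [CommRing S] [CommRing T] {f : S →+* T}
    (hf : Function.Surjective f) {q : MvPolynomial σ T} {d : ℕ} (hq : q.IsHomogeneous d) :
    ∃ Q : MvPolynomial σ S, Q.IsHomogeneous d ∧ MvPolynomial.map f Q = q := by
  obtain ⟨P, hP⟩ := MvPolynomial.map_surjective f hf q
  refine ⟨MvPolynomial.homogeneousComponent d P,
    MvPolynomial.homogeneousComponent_isHomogeneous d P, ?_⟩
  rw [← hc_map, hP,
    MvPolynomial.homogeneousComponent_of_mem ((MvPolynomial.mem_homogeneousSubmodule _ _).mpr hq),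
    if_pos rfl]

end Stmt7Aux

/-- Lemma 2.9: if the relation type of `I·R̄` (`R̄ = R/J`) is at most `h`, i.e. the kernel of
the map from the polynomial ring `R̄[X₁,…,X_m]` onto the Rees algebra `R̄[IR̄·t] ⊆ R̄[t]`,
`Xᵢ ↦ x̄ᵢ·t`, is generated by homogeneous elements of degree at most `h`, then
`Iⁿ ∩ J = I^{n-h}(I^h ∩ J)` for all `n > h`. -/
theorem stmt7 (R : Type*) [CommRing R] [IsNoetherianRing R] [IsLocalRing R]
    (J : Ideal R) (m : ℕ) (x : Fin m → R) (I : Ideal R) (hI : I = Ideal.span (Set.range x))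
    (h : ℕ) (hh : 1 ≤ h)
    (hreltype : ∃ G : Set (MvPolynomial (Fin m) (R ⧸ J)),
      (∀ p ∈ G, ∃ d : ℕ, d ≤ h ∧ MvPolynomial.IsHomogeneous p d) ∧
      Ideal.span G = RingHom.ker (MvPolynomial.aeval
        (fun i : Fin m => Polynomial.C (Ideal.Quotient.mk J (x i)) * Polynomial.X) :
          MvPolynomial (Fin m) (R ⧸ J) →ₐ[R ⧸ J] Polynomial (R ⧸ J))) :
    ∀ n : ℕ, h < n → I ^ n ⊓ J = I ^ (n - h) * (I ^ h ⊓ J) := by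
  classical
  subst hI
  obtain ⟨G, hGdeg, hGspan⟩ := hreltype
  intro n hn
  have hhn : h ≤ n := hn.le
  have hpow : Ideal.span (Set.range x) ^ (n - h) * Ideal.span (Set.range x) ^ h
      = Ideal.span (Set.range x) ^ n := by
    rw [← pow_add, Nat.sub_add_cancel hhn]
  refine le_antisymm ?_ ?_
  swap
  · refine le_inf ?_ (le_trans Ideal.mul_le_right inf_le_right)
    calc Ideal.span (Set.range x) ^ (n - h) * (Ideal.span (Set.range x) ^ h ⊓ J)
        ≤ Ideal.span (Set.range x) ^ (n - h) * Ideal.span (Set.range x) ^ h :=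
          Ideal.mul_mono_right inf_le_left
      _ = Ideal.span (Set.range x) ^ n := hpow
  set f : R →+* R ⧸ J := Ideal.Quotient.mk J with hf
  have hevalmap : ∀ P : MvPolynomial (Fin m) R,
      MvPolynomial.eval (fun i => f (x i)) (MvPolynomial.map f P)
        = f (MvPolynomial.eval x P) := by
    intro P
    rw [MvPolynomial.eval_map, ← MvPolynomial.eval₂_id P,
      MvPolynomial.eval₂_comp_left f (RingHom.id R) x P]
    rfl
  have hineq : ∀ d : ℕ, d ≤ h →
      Ideal.span (Set.range x) ^ (n - d) * (Ideal.span (Set.range x) ^ d ⊓ J)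
        ≤ Ideal.span (Set.range x) ^ (n - h) * (Ideal.span (Set.range x) ^ h ⊓ J) := by
    intro d hd
    have e1 : Ideal.span (Set.range x) ^ (n - d)
        = Ideal.span (Set.range x) ^ (n - h) * Ideal.span (Set.range x) ^ (h - d) := by
      rw [← pow_add]; congr 1; omega
    rw [e1, mul_assoc]
    refine Ideal.mul_mono_right (le_inf ?_ (Ideal.mul_le_right.trans inf_le_right))
    calc Ideal.span (Set.range x) ^ (h - d) * (Ideal.span (Set.range x) ^ d ⊓ J)
        ≤ Ideal.span (Set.range x) ^ (h - d) * Ideal.span (Set.range x) ^ d :=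
          Ideal.mul_mono_right inf_le_left
      _ = Ideal.span (Set.range x) ^ h := by rw [← pow_add, Nat.sub_add_cancel hd]
  intro a ha
  obtain ⟨haI, haJ⟩ := Submodule.mem_inf.mp ha
  obtain ⟨F, hF, hFx⟩ := Stmt7Aux.exists_homog_rep x n a haI
  have hFbhom : (MvPolynomial.map f F).IsHomogeneous n := hF.map f
  have hFbker : MvPolynomial.map f F ∈ Ideal.span G := by
    rw [hGspan, RingHom.mem_ker]
    show (MvPolynomial.aeval fun i => Polynomial.C (f (x i)) * Polynomial.X)
        (MvPolynomial.map f F) = 0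
    rw [Stmt7Aux.homog_aeval_CX hFbhom, hevalmap, hFx,
      Ideal.Quotient.eq_zero_iff_mem.mpr haJ]
    simp
  obtain ⟨c, hcsupp, hcsum⟩ := Submodule.mem_span_set.mp hFbker
  have hFb_eq : MvPolynomial.map f F
      = ∑ g ∈ c.support, MvPolynomial.homogeneousComponent n (c g * g) := by
    have h1 : MvPolynomial.map f F = ∑ g ∈ c.support, c g * g := by
      rw [← hcsum, Finsupp.sum]; simp [smul_eq_mul]
    calc MvPolynomial.map f F
        = MvPolynomial.homogeneousComponent n (MvPolynomial.map f F) := by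
          rw [MvPolynomial.homogeneousComponent_of_mem
            ((MvPolynomial.mem_homogeneousSubmodule _ _).mpr hFbhom), if_pos rfl]
      _ = _ := by rw [h1, map_sum]
  have key : ∀ g ∈ c.support, ∃ W : MvPolynomial (Fin m) R,
      MvPolynomial.map f W = MvPolynomial.homogeneousComponent n (c g * g) ∧
      W.IsHomogeneous n ∧
      MvPolynomial.eval x W ∈
        Ideal.span (Set.range x) ^ (n - h) * (Ideal.span (Set.range x) ^ h ⊓ J) := by
    intro g hg
    have hgG : g ∈ G := hcsupp hg
    obtain ⟨d, hdh, hghom⟩ := hGdeg g hgG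
    have hdn : d ≤ n := le_trans hdh hhn
    obtain ⟨P, hPhom, hPmap⟩ := Stmt7Aux.exists_homog_lift Ideal.Quotient.mk_surjective hghom
    obtain ⟨Q, hQhom, hQmap⟩ := Stmt7Aux.exists_homog_lift Ideal.Quotient.mk_surjective
      (MvPolynomial.homogeneousComponent_isHomogeneous (n - d) (c g))
    refine ⟨Q * P, ?_, ?_, ?_⟩
    · rw [map_mul, hf, hQmap, hPmap, ← Stmt7Aux.hc_mul_homog hghom (c g) (n - d),
        Nat.sub_add_cancel hdn]
    · have := hQhom.mul hPhom
      rwa [Nat.sub_add_cancel hdn] at this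
    · have hPJ : MvPolynomial.eval x P ∈ J := by
        have hker : (MvPolynomial.aeval
            (fun i : Fin m => Polynomial.C (f (x i)) * Polynomial.X)) g = 0 := by
          have hmem : g ∈ RingHom.ker (MvPolynomial.aeval
              (fun i : Fin m => Polynomial.C (f (x i)) * Polynomial.X) :
                MvPolynomial (Fin m) (R ⧸ J) →ₐ[R ⧸ J] Polynomial (R ⧸ J)) :=
            hGspan ▸ Ideal.subset_span hgG
          exact RingHom.mem_ker.mp hmem
        rw [Stmt7Aux.homog_aeval_CX hghom] at hker
        have h0 : MvPolynomial.eval (fun i => f (x i)) g = 0 := by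
          have := congrArg (fun q => Polynomial.coeff q d) hker
          simpa using this
        rw [← hPmap, ← hf, hevalmap P] at h0
        exact Ideal.Quotient.eq_zero_iff_mem.mp h0
      rw [map_mul]
      exact hineq d hdh (Ideal.mul_mem_mul (Stmt7Aux.eval_mem_pow x hQhom)
        (Submodule.mem_inf.mpr ⟨Stmt7Aux.eval_mem_pow x hPhom, hPJ⟩))
  choose W hWmap hWhom hWmem using key
  set F' : MvPolynomial (Fin m) R := ∑ g ∈ c.support.attach, W g.1 g.2 with hF'
  have hF'map : MvPolynomial.map f F' = MvPolynomial.map f F := by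
    rw [hFb_eq, hF', map_sum]
    exact (Finset.sum_congr rfl fun g _ => hWmap g.1 g.2).trans (Finset.sum_attach _ _)
  have hF'hom : F'.IsHomogeneous n :=
    MvPolynomial.IsHomogeneous.sum _ _ _ fun g _ => hWhom g.1 g.2
  have hHhom : (F - F').IsHomogeneous n := by
    have : F - F' ∈ MvPolynomial.homogeneousSubmodule (Fin m) R n :=
      Submodule.sub_mem _ hF hF'hom
    exact this
  have hHcoeff : ∀ d0 : Fin m →₀ ℕ, MvPolynomial.coeff d0 (F - F') ∈ J := by
    intro d0
    have h0 : f (MvPolynomial.coeff d0 (F - F')) = 0 := by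
      rw [← MvPolynomial.coeff_map, map_sub, hF'map, sub_self, MvPolynomial.coeff_zero]
    exact Ideal.Quotient.eq_zero_iff_mem.mp h0
  have hHmem : MvPolynomial.eval x (F - F') ∈ J * Ideal.span (Set.range x) ^ n := by
    rw [MvPolynomial.eval_eq']
    refine Ideal.sum_mem _ fun d0 hd0 => Ideal.mul_mem_mul (hHcoeff d0) ?_
    have := Stmt7Aux.prod_pow_mem x d0
    rwa [Stmt7Aux.homogDeg hHhom (MvPolynomial.mem_support_iff.mp hd0)] at this
  have hJI : J * Ideal.span (Set.range x) ^ n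
      ≤ Ideal.span (Set.range x) ^ (n - h) * (Ideal.span (Set.range x) ^ h ⊓ J) := by
    rw [← hpow, mul_comm J, mul_assoc]
    exact Ideal.mul_mono_right (le_inf Ideal.mul_le_left Ideal.mul_le_right)
  have hsplit : a = MvPolynomial.eval x F' + MvPolynomial.eval x (F - F') := by
    rw [← map_add]
    have hFF : F' + (F - F') = F := by ring
    rw [hFF, hFx]
  rw [hsplit]
  refine Ideal.add_mem _ ?_ (hJI hHmem)
  rw [hF', map_sum]
  exact Ideal.sum_mem _ fun g _ => hWmem g.1 g.2
end

section
/- Let (R, m) be a Noetherian local ring, let F = Rᵐ be a finitely generated free R-module, L ⊆ F a submodule, and J an ideal of R with J·F ⊆ L. Let h be a non-negative integer such that: (i) for every ideal I of R and every n ≥ h, Iⁿ ∩ J = I^{n−h}(I^h ∩ J); and (ii) for every ideal I of R and every n ≥ h, IⁿF ∩ L ⊆ I^{n−h}(I^hF ∩ L) + J·F. Then for every ideal I of R and every n ≥ h one has IⁿF ∩ L = I^{n−h}(I^hF ∩ L). -/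
/-!
Write `A = I^(n-h) (I^h F ∩ L)`. Hypothesis (ii) puts `IⁿF ∩ L` inside `A + JF`, and by the modular
law inside `A + (JF ∩ IⁿF)`. Since `F` is free, `JF ∩ IⁿF = (Iⁿ ∩ J)F`, which by (i) equals
`I^(n-h) (I^h ∩ J)F`, and this lies in `A` because `JF ⊆ L`.
-/

theorem eq_of_le_inf_of_inf_le_sup {α : Type*} [Lattice α] [IsModularLattice α] {a b c k : α}
    (ha : a ≤ b ⊓ c) (hbc : b ⊓ c ≤ a ⊔ k) (hk : k ⊓ b ≤ a) : b ⊓ c = a := by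
  refine le_antisymm ?_ ha
  calc b ⊓ c ≤ (a ⊔ k) ⊓ b := le_inf hbc inf_le_left
    _ = a ⊔ k ⊓ b := sup_inf_assoc_of_le k (ha.trans inf_le_left)
    _ ≤ a := sup_le le_rfl hk

namespace Submodule

variable {R M : Type*} [CommSemiring R] [AddCommMonoid M] [Module R M]

theorem pow_sub_smul_inf_le (I : Ideal R) (N L : Submodule R M) {h n : ℕ} (hn : h ≤ n) :
    I ^ (n - h) • (I ^ h • N ⊓ L) ≤ I ^ n • N ⊓ L := by
  refine le_inf ?_ (smul_le_right.trans' (smul_mono_right _ inf_le_right))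
  calc I ^ (n - h) • (I ^ h • N ⊓ L) ≤ I ^ (n - h) • I ^ h • N := smul_mono_right _ inf_le_left
    _ = I ^ n • N := by rw [← mul_smul, ← pow_add, Nat.sub_add_cancel hn]

theorem mem_smul_top_pi_iff {ι : Type*} [Fintype ι] (I : Ideal R) (x : ι → R) :
    x ∈ I • (⊤ : Submodule R (ι → R)) ↔ ∀ i, x i ∈ I := by
  refine ⟨fun hx i ↦ ?_, fun hx ↦ ?_⟩
  · induction hx using smul_induction_on' with
    | smul r hr f _ => exact I.mul_mem_right (f i) hr
    | add a _ b _ ha hb => exact I.add_mem ha hb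
  · classical
    rw [pi_eq_sum_univ x]
    exact _root_.sum_mem fun i _ ↦ smul_mem_smul (hx i) mem_top

theorem smul_top_inf_smul_top_pi {ι : Type*} [Fintype ι] (I J : Ideal R) :
    I • (⊤ : Submodule R (ι → R)) ⊓ J • ⊤ = (I ⊓ J) • ⊤ := by
  ext x
  simp only [mem_inf, mem_smul_top_pi_iff, forall_and]

end Submodule

open Submodule in
theorem stmt9_general (R : Type*) [CommRing R] 
    (m : ℕ) (L : Submodule R (Fin m → R)) (J : Ideal R)
    (hJL : J • (⊤ : Submodule R (Fin m → R)) ≤ L) (h : ℕ)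
    (hi : ∀ I : Ideal R, ∀ n : ℕ, h ≤ n → I ^ n ⊓ J = I ^ (n - h) * (I ^ h ⊓ J))
    (hii : ∀ I : Ideal R, ∀ n : ℕ, h ≤ n →
      I ^ n • (⊤ : Submodule R (Fin m → R)) ⊓ L ≤
        I ^ (n - h) • (I ^ h • (⊤ : Submodule R (Fin m → R)) ⊓ L) +
          J • (⊤ : Submodule R (Fin m → R))) :
    ∀ I : Ideal R, ∀ n : ℕ, h ≤ n →
      I ^ n • (⊤ : Submodule R (Fin m → R)) ⊓ L =
        I ^ (n - h) • (I ^ h • (⊤ : Submodule R (Fin m → R)) ⊓ L) := by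
  intro I n hn
  refine eq_of_le_inf_of_inf_le_sup (pow_sub_smul_inf_le I ⊤ L hn) (hii I n hn) ?_
  calc J • ⊤ ⊓ I ^ n • ⊤ = (I ^ n ⊓ J) • (⊤ : Submodule R (Fin m → R)) := by
        rw [inf_comm, smul_top_inf_smul_top_pi]
    _ = I ^ (n - h) • ((I ^ h ⊓ J) • ⊤) := by rw [hi I n hn, mul_smul]
    _ ≤ I ^ (n - h) • (I ^ h • ⊤ ⊓ L) :=
        smul_mono_right _ (le_inf (smul_mono_left inf_le_left)
          ((smul_mono_left inf_le_right).trans hJL))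

/-- Proposition 2.11 (core argument): if `h` is a strong Artin–Rees number for `(J, R)` and
for the pair `(L/JF, F/JF)` (expressed by inclusion (ii)), where `F = Rᵐ` is free and
`JF ⊆ L`, then `h` is a strong Artin–Rees number for `(L, F)`. -/
theorem stmt9 (R : Type*) [CommRing R] [IsNoetherianRing R] [IsLocalRing R]
    (m : ℕ) (L : Submodule R (Fin m → R)) (J : Ideal R)
    (hJL : J • (⊤ : Submodule R (Fin m → R)) ≤ L) (h : ℕ)
    (hi : ∀ I : Ideal R, ∀ n : ℕ, h ≤ n → I ^ n ⊓ J = I ^ (n - h) * (I ^ h ⊓ J))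
    (hii : ∀ I : Ideal R, ∀ n : ℕ, h ≤ n →
      I ^ n • (⊤ : Submodule R (Fin m → R)) ⊓ L ≤
        I ^ (n - h) • (I ^ h • (⊤ : Submodule R (Fin m → R)) ⊓ L) +
          J • (⊤ : Submodule R (Fin m → R))) :
    ∀ I : Ideal R, ∀ n : ℕ, h ≤ n →
      I ^ n • (⊤ : Submodule R (Fin m → R)) ⊓ L =
        I ^ (n - h) • (I ^ h • (⊤ : Submodule R (Fin m → R)) ⊓ L) :=
  stmt9_general R m L J hJL h hi hii
end

section
/- Let k be a field, let R = k[X, Y, Z]/(Z²), and denote by x, y, z the images of X, Y, Z in R. For n ≥ 2 let I_n be the ideal of R generated by xⁿ, yⁿ and x^{n−1}y + z, and let J be the ideal of R generated by z. Then the element x^{(n−1)²}·y^{n−1}·z does NOT belong to the ideal I_n·(I_n^{n−1} ∩ J). -/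
open MvPolynomial Finsupp

namespace St12X

noncomputable section

variable (k : Type*) [Field k]

local notation "S" => MvPolynomial (Fin 3) k

def eps : S →ₐ[k] S := aeval (fun i => if i = 2 then 0 else X i)

variable (n : ℕ)

def ww : Fin 3 → ℕ := ![1, 1, n]

def Ap : S := X 0 ^ (n-1) * X 1
def Wp : S := X 0 ^ (n-1) * X 1 + X 2
def Ig : Ideal S := Ideal.span {X 0 ^ n, X 1 ^ n, Wp k n}
def ZZ : Ideal S := Ideal.span {(X 2 : S) ^ 2}
def Zid : Ideal S := Ideal.span {(X 2 : S)}
def T (c : ℕ) : Submodule k S :=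
  Submodule.span k ((fun t : ℕ×ℕ×ℕ => X 0 ^ (n*t.1) * X 1 ^ (n*t.2.1) * Wp k n ^ t.2.2) ''
    {t | t.1 + t.2.1 + t.2.2 = c})

def Lmap : S →ₗ[k] S :=
  (basisMonomials (Fin 3) k).constr k
    (fun d => (d 1 % n) •
      (monomial (Finsupp.single 0 (d 0 - (n-1)) + Finsupp.single 1 (d 1 - 1)
        + Finsupp.single 2 1) (1:k)))

def Ebig : S := X 0 ^ ((n-1)^2) * X 1 ^ (n-1) * X 2

variable {k n}

section Generic
variable {σ : Type*} [DecidableEq σ]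


lemma compA {w : σ → ℕ} {g : MvPolynomial σ k} {d : ℕ} (hg : IsWeightedHomogeneous w g d)
    (f : MvPolynomial σ k) (m : ℕ) :
    weightedHomogeneousComponent w m (f * g) =
      if d ≤ m then weightedHomogeneousComponent w (m - d) f * g else 0 := by
  split_ifs with hdm
  · ext u
    rw [coeff_weightedHomogeneousComponent, coeff_mul, coeff_mul]
    by_cases hu : weight w u = m
    · rw [if_pos hu]
      refine Finset.sum_congr rfl ?_
      rintro ⟨v, v'⟩ hvv
      rw [Finset.HasAntidiagonal.mem_antidiagonal] at hvv
      dsimp only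
      by_cases hg' : coeff v' g = 0
      · simp [hg', coeff_weightedHomogeneousComponent]
      · have h1 : weight w v' = d := hg hg'
        have h2 : weight w v + weight w v' = m := by rw [← map_add, hvv, hu]
        rw [coeff_weightedHomogeneousComponent, if_pos (by omega)]
    · rw [if_neg hu]
      refine (Finset.sum_eq_zero ?_).symm
      rintro ⟨v, v'⟩ hvv
      rw [Finset.HasAntidiagonal.mem_antidiagonal] at hvv
      dsimp only
      by_cases hg' : coeff v' g = 0
      · simp [hg']
      · have h1 : weight w v' = d := hg hg'
        rw [coeff_weightedHomogeneousComponent, if_neg, zero_mul]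
        intro hv
        exact hu (by rw [← hvv, map_add, hv, h1]; omega)
  · ext u
    rw [coeff_weightedHomogeneousComponent, coeff_zero]
    by_cases hu : weight w u = m
    · rw [if_pos hu, coeff_mul]
      refine Finset.sum_eq_zero ?_
      rintro ⟨v, v'⟩ hvv
      rw [Finset.HasAntidiagonal.mem_antidiagonal] at hvv
      dsimp only
      by_cases hg' : coeff v' g = 0
      · simp [hg']
      · have h1 : weight w v' = d := hg hg'
        have h2 : weight w v + weight w v' = m := by rw [← map_add, hvv, hu]
        omega
    · rw [if_neg hu]

omit [DecidableEq σ] in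
lemma coeff_wt_ge {w : σ → ℕ} {u : MvPolynomial σ k} {B : ℕ}
    (hu : ∀ j, j < B → weightedHomogeneousComponent w j u = 0)
    {v : σ →₀ ℕ} (hv : coeff v u ≠ 0) : B ≤ weight w v := by
  by_contra h
  have h2 := hu (weight w v) (by omega)
  have h3 : coeff v (weightedHomogeneousComponent w (weight w v) u) = 0 := by
    rw [h2, coeff_zero]
  rw [coeff_weightedHomogeneousComponent, if_pos rfl] at h3
  exact hv h3

lemma compC1 {w : σ → ℕ} {u : MvPolynomial σ k} {B : ℕ}
    (hu : ∀ j, j < B → weightedHomogeneousComponent w j u = 0)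
    (f : MvPolynomial σ k) (m : ℕ) (hm : m < B) :
    weightedHomogeneousComponent w m (f * u) = 0 := by
  ext d
  rw [coeff_weightedHomogeneousComponent, coeff_zero]
  by_cases hd : weight w d = m
  · rw [if_pos hd, coeff_mul]
    refine Finset.sum_eq_zero ?_
    rintro ⟨v, v'⟩ hvv
    rw [Finset.HasAntidiagonal.mem_antidiagonal] at hvv
    dsimp only
    by_cases hg' : coeff v' u = 0
    · simp [hg']
    · have h1 := coeff_wt_ge hu hg'
      have h2 : weight w v + weight w v' = m := by rw [← map_add, hvv, hd]
      omega
  · rw [if_neg hd]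

lemma compC2 {w : σ → ℕ} (hw : ∀ i, w i ≠ 0) {u : MvPolynomial σ k} {B : ℕ}
    (hu : ∀ j, j < B → weightedHomogeneousComponent w j u = 0)
    (f : MvPolynomial σ k) :
    weightedHomogeneousComponent w B (f * u) =
      C (coeff 0 f) * weightedHomogeneousComponent w B u := by
  have hwt0 : ∀ v : σ →₀ ℕ, weight w v = 0 → v = 0 := by
    intro v hv
    haveI := Finsupp.nonTorsionWeight_of (R := ℕ) (w := w) hw
    exact (Finsupp.weight_eq_zero_iff_eq_zero w).mp hv
  ext d
  rw [coeff_weightedHomogeneousComponent, coeff_C_mul, coeff_weightedHomogeneousComponent]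
  by_cases hd : weight w d = B
  · rw [if_pos hd, if_pos hd, coeff_mul]
    refine Finset.sum_eq_single_of_mem (0, d) (by simp) ?_
    rintro ⟨v, v'⟩ hvv hne
    rw [Finset.HasAntidiagonal.mem_antidiagonal] at hvv
    dsimp only at hvv ⊢
    by_cases hg' : coeff v' u = 0
    · simp [hg']
    · exfalso
      have h1 := coeff_wt_ge hu hg'
      have h2 : weight w v + weight w v' = B := by rw [← map_add, hvv, hd]
      have h3 : weight w v = 0 := by omega
      have h4 : v = 0 := hwt0 _ h3
      subst h4
      rw [zero_add] at hvv
      exact hne (by rw [hvv])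
  · rw [if_neg hd, if_neg hd, mul_zero]


end Generic

-- ===== weights and homogeneity =====

lemma ww_ne (hn : 2 ≤ n) : ∀ i : Fin 3, ww n i ≠ 0 := by
  intro i; fin_cases i <;> simp [ww] <;> omega

lemma weight_single (i : Fin 3) (a : ℕ) : weight (ww n) (Finsupp.single i a) = a * ww n i := by
  rw [weight_apply, Finsupp.sum_single_index] <;> simp

lemma wt_mono (a b c : ℕ) :
    weight (ww n) (Finsupp.single (0:Fin 3) a + Finsupp.single 1 b + Finsupp.single 2 c)
      = a + b + c * n := by
  simp only [map_add, weight_single]; simp [ww]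

lemma hom_XYZ (a b c : ℕ) :
    IsWeightedHomogeneous (ww n) ((X 0 ^ a * X 1 ^ b * X 2 ^ c : S)) (a + b + c * n) := by
  have h : (X 0 ^ a * X 1 ^ b * X 2 ^ c : S) =
      monomial (Finsupp.single (0:Fin 3) a + Finsupp.single 1 b + Finsupp.single 2 c) 1 := by
    simp [X_pow_eq_monomial, monomial_mul]
  rw [h]
  exact isWeightedHomogeneous_monomial _ _ _ (wt_mono a b c)

lemma homXn : IsWeightedHomogeneous (ww n) ((X 0 : S) ^ n) n := by
  simpa using hom_XYZ (k := k) (n := n) n 0 0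

lemma homYn : IsWeightedHomogeneous (ww n) ((X 1 : S) ^ n) n := by
  simpa using hom_XYZ (k := k) (n := n) 0 n 0

lemma homZ : IsWeightedHomogeneous (ww n) ((X 2 : S)) n := by
  simpa using hom_XYZ (k := k) (n := n) 0 0 1

lemma homZ2 : IsWeightedHomogeneous (ww n) ((X 2 : S) ^ 2) (2*n) := by
  simpa using hom_XYZ (k := k) (n := n) 0 0 2

lemma homWp (hn : 2 ≤ n) : IsWeightedHomogeneous (ww n) (Wp k n) n := by
  rw [Wp]
  have h1 := hom_XYZ (k := k) (n := n) (n-1) 1 0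
  simp only [pow_zero, pow_one, mul_one] at h1
  have e1 : n - 1 + 1 + 0 * n = n := by omega
  rw [e1] at h1
  exact h1.add homZ

lemma hom_E (hn : 2 ≤ n) : IsWeightedHomogeneous (ww n) (Ebig k n) (n*n) := by
  rw [Ebig]
  have h1 := hom_XYZ (k := k) (n := n) ((n-1)^2) (n-1) 1
  rw [show (X 2 : S) ^ 1 = X 2 from pow_one _] at h1
  convert h1 using 1
  obtain ⟨p, rfl⟩ : ∃ p, n = p + 2 := ⟨n - 2, by omega⟩
  have e : p + 2 - 1 = p + 1 := by omega
  rw [e]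
  ring

-- ===== span triple =====

lemma mem_span_triple {a b c p : S} (hp : p ∈ Ideal.span {a, b, c}) :
    ∃ f g h : S, p = f * a + g * b + h * c := by
  rw [Ideal.mem_span_insert] at hp
  obtain ⟨f, y, hy, rfl⟩ := hp
  rw [Ideal.mem_span_insert] at hy
  obtain ⟨g, z, hz, rfl⟩ := hy
  rw [Ideal.mem_span_singleton] at hz
  obtain ⟨h, rfl⟩ := hz
  exact ⟨f, g, h, by ring⟩

-- ===== T multiplication =====

lemma T_mul_gen {g : S} (hg : g = X 0 ^ n ∨ g = X 1 ^ n ∨ g = Wp k n) {j : ℕ} {q : S}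
    (hq : q ∈ T k n j) : q * g ∈ T k n (j+1) := by
  refine Submodule.span_induction (p := fun q _ => q * g ∈ T k n (j+1)) ?_ ?_ ?_ ?_ hq
  · rintro - ⟨⟨a, b, c⟩, ht, rfl⟩
    simp only [Set.mem_setOf_eq] at ht
    rcases hg with rfl | rfl | rfl
    · exact Submodule.subset_span ⟨(a+1, b, c), by simp only [Set.mem_setOf_eq]; omega, by ring⟩
    · exact Submodule.subset_span ⟨(a, b+1, c), by simp only [Set.mem_setOf_eq]; omega, by ring⟩
    · exact Submodule.subset_span ⟨(a, b, c+1), by simp only [Set.mem_setOf_eq]; omega, by ring⟩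
  · show (0:S) * g ∈ T k n (j+1)
    rw [zero_mul]; exact zero_mem _
  · intro x y _ _ hx hy
    show (x + y) * g ∈ T k n (j+1)
    rw [add_mul]; exact add_mem hx hy
  · intro r x _ hx
    show (r • x) * g ∈ T k n (j+1)
    rw [smul_mul_assoc]; exact Submodule.smul_mem _ _ hx

lemma ZZ_comp {q : S} (hq : q ∈ ZZ k) (m : ℕ) :
    weightedHomogeneousComponent (ww n) m q ∈ ZZ k := by
  rw [ZZ, Ideal.mem_span_singleton] at hq
  obtain ⟨c, rfl⟩ := hq
  rw [show (X 2 : S)^2 * c = c * (X 2)^2 from mul_comm _ _, compA homZ2]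
  split_ifs
  · rw [ZZ, Ideal.mem_span_singleton]
    exact Dvd.intro_left _ rfl
  · exact zero_mem _

-- ===== Wpow / eps / Lmap =====


lemma Wpow (c : ℕ) : ∃ h : S, Wp k n ^ (c+1) =
    Ap k n ^ (c+1) + (c+1) • (Ap k n ^ c * X 2) + X 2 ^ 2 * h := by
  induction c with
  | zero =>
    refine ⟨0, ?_⟩
    simp only [zero_add, pow_one, pow_zero, one_mul, one_smul, mul_zero, add_zero]
    rw [Wp, Ap]
  | succ c ih =>
    obtain ⟨h, hh⟩ := ih
    refine ⟨h * Wp k n + (c+1) • Ap k n ^ c, ?_⟩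
    rw [pow_succ, hh]
    rw [Wp, ← Ap]
    simp only [nsmul_eq_mul, Nat.cast_add, Nat.cast_one]
    ring

lemma eps_X0 : eps k (X 0) = X 0 := by simp [eps]
lemma eps_X1 : eps k (X 1) = X 1 := by simp [eps]
lemma eps_X2 : eps k (X 2) = 0 := by simp [eps]
lemma eps_Wp : eps k (Wp k n) = Ap k n := by
  rw [Wp, Ap]; simp only [map_add, map_mul, map_pow, eps_X0, eps_X1, eps_X2, add_zero]

lemma Lmap_monomial (d : Fin 3 →₀ ℕ) : Lmap k n (monomial d 1) =
    (d 1 % n) • (monomial (Finsupp.single 0 (d 0 - (n-1)) + Finsupp.single 1 (d 1 - 1)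
        + Finsupp.single 2 1) (1:k)) := by
  have h : (monomial d (1:k)) = basisMonomials (Fin 3) k d := by
    rw [coe_basisMonomials]
  rw [Lmap, h, Module.Basis.constr_basis]

lemma XY_monomial (p q : ℕ) : (X 0 ^ p * X 1 ^ q : S) =
    monomial (Finsupp.single 0 p + Finsupp.single 1 q) 1 := by
  rw [X_pow_eq_monomial, X_pow_eq_monomial, monomial_mul, mul_one]

lemma XYZ_monomial (p q : ℕ) : (X 0 ^ p * X 1 ^ q * X 2 : S) =
    monomial (Finsupp.single 0 p + Finsupp.single 1 q + Finsupp.single 2 1) 1 := by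
  rw [XY_monomial, show (X 2 : S) = monomial (Finsupp.single 2 1) 1 by
    rw [← X_pow_eq_monomial, pow_one], monomial_mul, mul_one]

lemma M_form (a b c : ℕ) : (X 0 ^ (n*a) * X 1 ^ (n*b) * Ap k n ^ c : S) =
    X 0 ^ (n*a + (n-1)*c) * X 1 ^ (n*b + c) := by
  rw [Ap, mul_pow, ← pow_mul, pow_add, pow_add]
  ring

lemma T_sub (hn : 2 ≤ n) {τ : S} (hτ : τ ∈ T k n (n-1)) :
    τ - eps k τ - Lmap k n (eps k τ) ∈ ZZ k := by
  set Φ : S →ₗ[k] S :=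
    LinearMap.id - (eps k).toLinearMap - (Lmap k n) ∘ₗ (eps k).toLinearMap with hΦ
  have key : T k n (n-1) ≤ Submodule.comap Φ (Submodule.restrictScalars k (ZZ k)) := by
    rw [T, Submodule.span_le]
    rintro - ⟨⟨a, b, c⟩, ht, rfl⟩
    simp only [Set.mem_setOf_eq] at ht
    rw [SetLike.mem_coe]
    simp only [Submodule.mem_comap, hΦ, LinearMap.sub_apply, LinearMap.id_apply,
      LinearMap.coe_comp, Function.comp_apply, AlgHom.toLinearMap_apply,
      Submodule.restrictScalars_mem]
    have heps : eps k (X 0 ^ (n*a) * X 1 ^ (n*b) * Wp k n ^ c)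
        = X 0 ^ (n*a + (n-1)*c) * X 1 ^ (n*b + c) := by
      rw [map_mul, map_mul, map_pow, map_pow, map_pow, eps_X0, eps_X1, eps_Wp, M_form]
    rw [heps]
    have hL : Lmap k n (X 0 ^ (n*a + (n-1)*c) * X 1 ^ (n*b + c) : S) =
        (c % n) • (monomial (Finsupp.single 0 (n*a + (n-1)*c - (n-1))
          + Finsupp.single 1 (n*b + c - 1) + Finsupp.single 2 1) (1:k)) := by
      rw [XY_monomial, Lmap_monomial]
      simp [Finsupp.add_apply, Finsupp.single_apply, Nat.mul_add_mod]
    rw [hL]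
    rcases c with _ | c
    · simp only [Nat.zero_mod, zero_smul, sub_zero, pow_zero, mul_one, Nat.mul_zero,
        add_zero, sub_self]
      exact zero_mem _
    · have hcn : c + 1 < n := by omega
      have e0 : n*a + (n-1)*(c+1) - (n-1) = n*a + (n-1)*c := by
        rw [Nat.mul_succ, ← Nat.add_assoc, Nat.add_sub_cancel]
      have e1 : n*b + (c+1) - 1 = n*b + c := by
        rw [← Nat.add_assoc, Nat.add_sub_cancel]
      rw [Nat.mod_eq_of_lt hcn, e0, e1, ← XYZ_monomial, ← M_form]
      obtain ⟨h, hh⟩ := Wpow (n := n) (k := k) c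
      rw [ZZ, Ideal.mem_span_singleton]
      refine ⟨h * (X 0 ^ (n*a) * X 1 ^ (n*b)), ?_⟩
      rw [hh, ← M_form]
      simp only [nsmul_eq_mul, Nat.cast_add, Nat.cast_one]
      ring
  exact key hτ


-- ===== the power induction =====

lemma pow_comp (hn : 2 ≤ n) : ∀ (j : ℕ), ∀ s ∈ (Ig k n ^ (j+1) : Ideal S),
    (∀ m, m < n*(j+1) → weightedHomogeneousComponent (ww n) m s = 0) ∧
    weightedHomogeneousComponent (ww n) (n*(j+1)) s ∈ T k n (j+1) := by
  have hT1 : ∀ g : S, g = X 0 ^ n ∨ g = X 1 ^ n ∨ g = Wp k n → g ∈ T k n 1 := by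
    rintro g (rfl | rfl | rfl)
    · exact Submodule.subset_span ⟨(1,0,0), by simp, by simp⟩
    · exact Submodule.subset_span ⟨(0,1,0), by simp, by simp⟩
    · exact Submodule.subset_span ⟨(0,0,1), by simp, by simp⟩
  intro j
  induction j with
  | zero =>
    intro s hs
    rw [pow_one, Ig] at hs
    obtain ⟨f1, f2, f3, rfl⟩ := mem_span_triple hs
    simp only [zero_add, mul_one]
    constructor
    · intro m hm
      have h : ¬ n ≤ m := by omega
      rw [map_add, map_add, compA homXn, compA homYn, compA (homWp hn),
        if_neg h, if_neg h, if_neg h, add_zero, add_zero]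
    · rw [map_add, map_add, compA homXn, compA homYn, compA (homWp hn),
        if_pos le_rfl, if_pos le_rfl, if_pos le_rfl, Nat.sub_self,
        weightedHomogeneousComponent_zero _ (ww_ne hn),
        weightedHomogeneousComponent_zero _ (ww_ne hn),
        weightedHomogeneousComponent_zero _ (ww_ne hn),
        ← smul_eq_C_mul, ← smul_eq_C_mul, ← smul_eq_C_mul]
      exact add_mem (add_mem (Submodule.smul_mem _ _ (hT1 _ (Or.inl rfl)))
        (Submodule.smul_mem _ _ (hT1 _ (Or.inr (Or.inl rfl)))))
        (Submodule.smul_mem _ _ (hT1 _ (Or.inr (Or.inr rfl))))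
  | succ j ih =>
    intro s hs
    rw [pow_succ] at hs
    have hsum : n * (j + 1 + 1) = n * (j + 1) + n := by ring
    refine Submodule.mul_induction_on hs ?_ ?_
    · intro u hu v hv
      obtain ⟨f1, f2, f3, rfl⟩ := mem_span_triple hv
      have hrw : u * (f1 * X 0 ^ n + f2 * X 1 ^ n + f3 * Wp k n)
          = (f1*u) * X 0 ^ n + (f2*u) * X 1 ^ n + (f3*u) * Wp k n := by ring
      rw [hrw, hsum]
      obtain ⟨ihu1, ihu2⟩ := ih u hu
      constructor
      · intro m hm
        rw [map_add, map_add, compA homXn, compA homYn, compA (homWp hn)]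
        by_cases hnm : n ≤ m
        · rw [if_pos hnm, if_pos hnm, if_pos hnm,
            compC1 ihu1 _ _ (by omega), compC1 ihu1 _ _ (by omega),
            compC1 ihu1 _ _ (by omega), zero_mul, zero_mul, zero_mul, add_zero, add_zero]
        · rw [if_neg hnm, if_neg hnm, if_neg hnm, add_zero, add_zero]
      · have hle : n ≤ n * (j + 1) + n := by omega
        rw [map_add, map_add, compA homXn, compA homYn, compA (homWp hn),
          if_pos hle, if_pos hle, if_pos hle, Nat.add_sub_cancel,
          compC2 (ww_ne hn) ihu1, compC2 (ww_ne hn) ihu1, compC2 (ww_ne hn) ihu1,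
          mul_assoc, mul_assoc, mul_assoc, ← smul_eq_C_mul, ← smul_eq_C_mul, ← smul_eq_C_mul]
        exact add_mem (add_mem
          (Submodule.smul_mem _ _ (T_mul_gen (Or.inl rfl) ihu2))
          (Submodule.smul_mem _ _ (T_mul_gen (Or.inr (Or.inl rfl)) ihu2)))
          (Submodule.smul_mem _ _ (T_mul_gen (Or.inr (Or.inr rfl)) ihu2))
    · intro x y hx hy
      exact ⟨fun m hm => by rw [map_add, (hx.1) m hm, (hy.1) m hm, add_zero],
        by rw [map_add]; exact add_mem hx.2 hy.2⟩


-- ===== the crux lemma =====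

lemma crux (hn : 2 ≤ n) {v : MvPolynomial (Fin 3) k}
    (hv : v ∈ (Ig k n ^ (n-1) ⊔ ZZ k) ⊓ Zid k) (m : ℕ) (hm : m ≤ n*(n-1)) :
    weightedHomogeneousComponent (ww n) m v ∈ ZZ k := by
  have e : n - 1 = (n-2)+1 := by omega
  rw [e] at hv hm
  obtain ⟨hv1, hv2⟩ := Submodule.mem_inf.mp hv
  obtain ⟨s, hs, ζ, hζ, rfl⟩ := Submodule.mem_sup.mp hv1
  rw [Zid, Ideal.mem_span_singleton] at hv2
  obtain ⟨g, hg⟩ := hv2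
  obtain ⟨hs1, hs2⟩ := pow_comp hn (n-2) s hs
  have hζc : ∀ m' : ℕ, weightedHomogeneousComponent (ww n) m' ζ ∈ ZZ k :=
    fun m' => ZZ_comp hζ m'
  by_cases hlt : m < n * ((n-2)+1)
  · rw [map_add, hs1 m hlt, zero_add]
    exact hζc m
  · have hnB : n ≤ n * ((n-2)+1) := by
      calc n = n * 1 := (mul_one n).symm
      _ ≤ n * ((n-2)+1) := Nat.mul_le_mul_left n (by omega)
    have hmeq : m = n * ((n-2)+1) := by omega
    subst hmeq
    -- τ := component of s
    set τ := weightedHomogeneousComponent (ww n) (n * ((n-2)+1)) s with hτ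
    have hτT : τ ∈ T k n (n-1) := by rw [e]; exact hs2
    have hsplit : τ + weightedHomogeneousComponent (ww n) (n * ((n-2)+1)) ζ
        = weightedHomogeneousComponent (ww n) (n * ((n-2)+1) - n) g * X 2 := by
      rw [hτ, ← map_add, hg, mul_comm (X 2 : MvPolynomial (Fin 3) k) g, compA homZ, if_pos hnB]
    have hετ : eps k τ = 0 := by
      have h1 : τ = weightedHomogeneousComponent (ww n) (n * ((n-2)+1) - n) g * X 2
          - weightedHomogeneousComponent (ww n) (n * ((n-2)+1)) ζ := by
        rw [← hsplit]; ring
      have hz2 := hζc (n * ((n-2)+1))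
      rw [ZZ, Ideal.mem_span_singleton] at hz2
      obtain ⟨c2, hc2⟩ := hz2
      rw [h1, map_sub, map_mul, eps_X2, mul_zero, hc2, map_mul, map_pow, eps_X2]
      ring
    have hfinal := T_sub hn hτT
    rw [hετ, map_zero, sub_zero, sub_zero] at hfinal
    rw [map_add]
    exact add_mem hfinal (hζc _)

-- ===== Ebig is not in ZZ =====

lemma Ebig_not_ZZ (hn : 2 ≤ n) : Ebig k n ∉ ZZ k := by
  rw [ZZ, Ideal.mem_span_singleton]
  rintro ⟨c, hc⟩
  have h := congrArg
    (coeff (Finsupp.single (0 : Fin 3) ((n-1)^2) + Finsupp.single 1 (n-1) + Finsupp.single 2 1)) hc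
  rw [Ebig, XYZ_monomial, coeff_monomial, if_pos rfl, X_pow_eq_monomial,
    coeff_monomial_mul', if_neg] at h
  · exact one_ne_zero h
  · intro hle
    have h2 := hle 2
    simp [Finsupp.add_apply, Finsupp.single_apply] at h2

-- ===== high part vanishing =====

lemma high_part (v : MvPolynomial (Fin 3) k) (N j : ℕ) (hj : j < N) :
    weightedHomogeneousComponent (ww n) j
      (v - ∑ m ∈ Finset.range N, weightedHomogeneousComponent (ww n) m v) = 0 := by
  rw [map_sub, map_sum]
  have hterm : ∀ m ∈ Finset.range N,
      weightedHomogeneousComponent (ww n) j (weightedHomogeneousComponent (ww n) m v)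
      = if j = m then weightedHomogeneousComponent (ww n) m v else 0 := by
    intro m _
    exact weightedHomogeneousComponent_of_mem (weightedHomogeneousComponent_mem (ww n) v m)
  rw [Finset.sum_congr rfl hterm, Finset.sum_ite_eq, if_pos (Finset.mem_range.mpr hj), sub_self]

-- ===== upstairs main lemma =====

lemma upstairs (hn : 2 ≤ n) :
    Ebig k n ∉ Ig k n * ((Ig k n ^ (n-1) ⊔ ZZ k) ⊓ Zid k) ⊔ ZZ k := by
  intro hmem
  have harith : n * n = n * (n-1) + n := by
    have e1 : (n-1)+1 = n := by omega
    calc n * n = n * ((n-1)+1) := by rw [e1]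
    _ = n * (n-1) + n := by ring
  obtain ⟨P, hP, ζ, hζ, hEq⟩ := Submodule.mem_sup.mp hmem
  have hPc : weightedHomogeneousComponent (ww n) (n*n) P ∈ ZZ k := by
    refine Submodule.mul_induction_on hP ?_ ?_
    · intro u hu v hv
      obtain ⟨f1, f2, f3, rfl⟩ := mem_span_triple hu
      set vlow : MvPolynomial (Fin 3) k :=
        ∑ m ∈ Finset.range (n*(n-1)+1), weightedHomogeneousComponent (ww n) m v with hvlow
      have hvl : vlow ∈ ZZ k := by
        rw [hvlow]
        exact Submodule.sum_mem _ (fun m hm =>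
          crux hn hv m (by have := Finset.mem_range.mp hm; omega))
      have expand : (f1 * X 0 ^ n + f2 * X 1 ^ n + f3 * Wp k n) * v
          = (f1 * X 0 ^ n + f2 * X 1 ^ n + f3 * Wp k n) * vlow
            + ((f1 * (v - vlow)) * X 0 ^ n + (f2 * (v - vlow)) * X 1 ^ n
              + (f3 * (v - vlow)) * Wp k n) := by ring
      rw [expand, map_add]
      refine add_mem (ZZ_comp (Ideal.mul_mem_left _ _ hvl) _) ?_
      have hzero : ∀ f : MvPolynomial (Fin 3) k,
          weightedHomogeneousComponent (ww n) (n*n - n) (f * (v - vlow)) = 0 := by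
        intro f
        refine compC1 (fun j hj => high_part v _ j hj) f _ ?_
        omega
      have hle : n ≤ n * n := by omega
      rw [map_add, map_add, compA homXn, compA homYn, compA (homWp hn),
        if_pos hle, if_pos hle, if_pos hle, hzero, hzero, hzero,
        zero_mul, zero_mul, zero_mul, add_zero, add_zero]
      exact zero_mem _
    · intro x y hx hy
      rw [map_add]; exact add_mem hx hy
  have hEc : weightedHomogeneousComponent (ww n) (n*n) (Ebig k n) = Ebig k n :=
    (hom_E hn).weightedHomogeneousComponent_same
  have : Ebig k n ∈ ZZ k := by
    rw [← hEc, ← hEq, map_add]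
    exact add_mem hPc (ZZ_comp hζ _)
  exact Ebig_not_ZZ hn this

end

end St12X

set_option synthInstance.maxHeartbeats 1000000
set_option maxHeartbeats 1000000

/-- Example (dimension two): in `R = k[X,Y,Z]/(Z²)`, with `I_n = (xⁿ, yⁿ, x^{n-1}y + z)` and
`J = (z)`, the element `x^{(n-1)²}y^{n-1}z` does not lie in `I_n·(I_n^{n-1} ∩ J)` for `n ≥ 2`. -/
theorem stmt12 (k : Type*) [Field k]
    (x y z : MvPolynomial (Fin 3) k ⧸
      Ideal.span {(MvPolynomial.X 2 : MvPolynomial (Fin 3) k) ^ 2})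
    (hx : x = Ideal.Quotient.mk _ (MvPolynomial.X 0))
    (hy : y = Ideal.Quotient.mk _ (MvPolynomial.X 1))
    (hz : z = Ideal.Quotient.mk _ (MvPolynomial.X 2))
    (n : ℕ) (hn : 2 ≤ n) :
    x ^ ((n - 1) ^ 2) * y ^ (n - 1) * z ∉
      Ideal.span {x ^ n, y ^ n, x ^ (n - 1) * y + z} *
        (Ideal.span {x ^ n, y ^ n, x ^ (n - 1) * y + z} ^ (n - 1) ⊓ Ideal.span {z}) := by
  subst hx hy hz
  set mk := Ideal.Quotient.mk (Ideal.span {(MvPolynomial.X 2 : MvPolynomial (Fin 3) k) ^ 2})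
    with hmk
  intro hmem
  have hsurj : Function.Surjective mk := Ideal.Quotient.mk_surjective
  have hker : RingHom.ker mk = St12X.ZZ k := by
    rw [St12X.ZZ, hmk]; exact Ideal.mk_ker
  have hbot : Ideal.comap mk ⊥ = St12X.ZZ k := by
    rw [← hker]; rfl
  have hZZle : St12X.ZZ k ≤ St12X.Zid k := by
    rw [St12X.ZZ, Ideal.span_le, Set.singleton_subset_iff]
    rw [SetLike.mem_coe, St12X.Zid, Ideal.mem_span_singleton]
    exact ⟨MvPolynomial.X 2, sq (MvPolynomial.X 2)⟩
  have hgen : (Ideal.span {mk (MvPolynomial.X 0) ^ n, mk (MvPolynomial.X 1) ^ n,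
        mk (MvPolynomial.X 0) ^ (n-1) * mk (MvPolynomial.X 1) + mk (MvPolynomial.X 2)})
      = Ideal.map mk (St12X.Ig k n) := by
    rw [St12X.Ig, Ideal.map_span]
    congr 1
    rw [Set.image_insert_eq, Set.image_insert_eq, Set.image_singleton]
    simp [St12X.Wp, map_pow, map_mul, map_add]
  have hzid : (Ideal.span {mk (MvPolynomial.X 2)}) = Ideal.map mk (St12X.Zid k) := by
    rw [St12X.Zid, Ideal.map_span, Set.image_singleton]
  rw [hgen, hzid, ← Ideal.map_pow] at hmem
  have hinf : Ideal.map mk (St12X.Ig k n ^ (n-1)) ⊓ Ideal.map mk (St12X.Zid k)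
      = Ideal.map mk ((St12X.Ig k n ^ (n-1) ⊔ St12X.ZZ k) ⊓ St12X.Zid k) := by
    conv_lhs => rw [← Ideal.map_comap_of_surjective mk hsurj
      (Ideal.map mk (St12X.Ig k n ^ (n-1)) ⊓ Ideal.map mk (St12X.Zid k))]
    rw [Ideal.comap_inf, Ideal.comap_map_of_surjective mk hsurj,
      Ideal.comap_map_of_surjective mk hsurj, hbot]
    congr 1
    rw [sup_eq_left.mpr hZZle]
  rw [hinf, ← Ideal.map_mul] at hmem
  have hE : mk (MvPolynomial.X 0) ^ ((n-1)^2) * mk (MvPolynomial.X 1) ^ (n-1)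
      * mk (MvPolynomial.X 2) = mk (St12X.Ebig k n) := by
    rw [St12X.Ebig]; simp [map_mul, map_pow]
  rw [hE] at hmem
  have hcm : St12X.Ebig k n ∈ Ideal.comap mk
      (Ideal.map mk (St12X.Ig k n * ((St12X.Ig k n ^ (n-1) ⊔ St12X.ZZ k) ⊓ St12X.Zid k))) :=
    Ideal.mem_comap.mpr hmem
  rw [Ideal.comap_map_of_surjective mk hsurj, hbot] at hcm
  exact St12X.upstairs hn hcm
end

section
/- Let k be a field, let R = k[X, Y, Z]/(XZ), and denote by x, y, z the images of X, Y, Z in R. For n ≥ 1 let I_n be the ideal of R generated by xⁿ, yⁿ and x^{n−1}y + zⁿ, and let J be the ideal of R generated by z. Then the element z^{n²} belongs to I_nⁿ ∩ J. -/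
set_option synthInstance.maxHeartbeats 1000000
set_option maxHeartbeats 1000000

lemma add_pow_of_mul_eq_zero {R : Type*} [CommRing R] {a b : R} (h : a * b = 0) :
    ∀ n : ℕ, 1 ≤ n → (a + b) ^ n = a ^ n + b ^ n := by
  intro n hn
  induction n with
  | zero => omega
  | succ m ih =>
    rcases Nat.eq_or_lt_of_le hn with h1 | h1
    · simp [← h1]
    · have hm : 1 ≤ m := by omega
      rw [pow_succ, ih hm]
      have hab : a ^ m * b = 0 := by
        have : a ^ m * b = a ^ (m - 1) * (a * b) := by
          rw [← mul_assoc, ← pow_succ]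
          congr 2
          omega
        rw [this, h, mul_zero]
      have hba : b ^ m * a = 0 := by
        have : b ^ m * a = b ^ (m - 1) * (b * a) := by
          rw [← mul_assoc, ← pow_succ]
          congr 2
          omega
        rw [this, mul_comm b a, h, mul_zero]
      have : (a ^ m + b ^ m) * (a + b) = a ^ (m + 1) + b ^ (m + 1)
          + (a ^ m * b + b ^ m * a) := by ring
      rw [this, hab, hba]
      ring

/-- Example (dimension two, reduced): in `R = k[X,Y,Z]/(XZ)`, with
`I_n = (xⁿ, yⁿ, x^{n-1}y + zⁿ)` and `J = (z)`, the element `z^{n²}` lies in `I_nⁿ ∩ J`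
for every `n ≥ 1`. -/
theorem stmt14 (k : Type*) [Field k]
    (x y z : MvPolynomial (Fin 3) k ⧸
      Ideal.span {(MvPolynomial.X 0 : MvPolynomial (Fin 3) k) * MvPolynomial.X 2})
    (hx : x = Ideal.Quotient.mk _ (MvPolynomial.X 0))
    (hy : y = Ideal.Quotient.mk _ (MvPolynomial.X 1))
    (hz : z = Ideal.Quotient.mk _ (MvPolynomial.X 2))
    (n : ℕ) (hn : 1 ≤ n) :
    z ^ (n ^ 2) ∈
      Ideal.span {x ^ n, y ^ n, x ^ (n - 1) * y + z ^ n} ^ n ⊓ Ideal.span {z} := by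
  have hxz : x * z = 0 := by
    rw [hx, hz, ← map_mul, Ideal.Quotient.eq_zero_iff_mem]
    exact Ideal.subset_span rfl
  refine Ideal.mem_inf.mpr ⟨?_, ?_⟩
  · -- membership in I^n
    set I : Ideal _ := Ideal.span {x ^ n, y ^ n, x ^ (n - 1) * y + z ^ n} with hI
    have hgen1 : x ^ n ∈ I := Ideal.subset_span (by simp)
    have hgen2 : y ^ n ∈ I := Ideal.subset_span (by simp)
    have hgen3 : x ^ (n - 1) * y + z ^ n ∈ I := Ideal.subset_span (by simp)
    rcases Nat.eq_or_lt_of_le hn with h1 | h1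
    · -- n = 1
      subst h1
      have hz1 : z ^ ((1:ℕ) ^ 2) = (x ^ (1 - 1) * y + z ^ 1) - x ^ (1 - 1) * y := by
        norm_num
      rw [hz1, pow_one I]
      exact Ideal.sub_mem _ hgen3 (by simpa using hgen2)
    · -- n ≥ 2
      obtain ⟨m, rfl⟩ : ∃ m, n = m + 2 := ⟨n - 2, by omega⟩
      have hab : (x ^ (m + 2 - 1) * y) * z ^ (m + 2) = 0 := by
        have : (x ^ (m + 2 - 1) * y) * z ^ (m + 2)
            = (x * z) * (x ^ m * y * z ^ (m + 1)) := by
          have h21 : m + 2 - 1 = m + 1 := rfl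
          rw [h21]; ring
        rw [this, hxz, zero_mul]
      have key : z ^ ((m + 2) ^ 2)
          = (x ^ (m + 2 - 1) * y + z ^ (m + 2)) ^ (m + 2)
            - (x ^ (m + 2)) ^ (m + 2 - 1) * y ^ (m + 2) := by
        rw [add_pow_of_mul_eq_zero hab (m + 2) (by omega)]
        have h21 : m + 2 - 1 = m + 1 := rfl
        rw [h21]
        rw [mul_pow, ← pow_mul, ← pow_mul, ← pow_mul]
        ring_nf
      rw [key]
      refine Ideal.sub_mem _ (Ideal.pow_mem_pow hgen3 _) ?_
      have hpow : I ^ (m + 2) = I ^ (m + 2 - 1) * I := by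
        exact pow_succ I (m + 1)
      rw [hpow]
      exact Ideal.mul_mem_mul (Ideal.pow_mem_pow hgen1 _) hgen2
  · -- membership in (z)
    rw [Ideal.mem_span_singleton]
    exact dvd_pow_self z (by positivity)
end

section
/- Let k be a field, let R = k[X, Y, Z]/(XZ), and denote by x, y, z the images of X, Y, Z in R. For n ≥ 1 let I_n be the ideal of R generated by xⁿ, yⁿ and x^{n−1}y + zⁿ, and let J be the ideal of R generated by z. Then the element z^{n²} does NOT belong to the ideal I_n·(I_n^{n−1} ∩ J). -/
/-!
`Spec R` is the union of the planes `X = 0` and `Z = 0`. Restricting functions to the `Z`-axis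
and to the plane `Z = 0` gives ring maps `ε = toZAxis : R → k[T]` (`x, y ↦ 0`, `z ↦ T`) and
`δ = toXYPlane : R → k[X, Y]` (`z ↦ 0`). For `f ∈ Iₙ^m` with `m < n`, the coefficient of
`T^(nm)` in `ε f` equals the coefficient of `X^((n-1)m) Y^m` in `δ f`: among the products `xⁿᵃ yⁿᵇ gᶜ`
(`a + b + c = m`, `g = x^(n-1) y + zⁿ`) spanning `Iₙ^m`, only `g^m` contributes to either
coefficient, and it contributes the constant term of its cofactor to both.

Since `ε Iₙ = (Tⁿ)` and `ε` is surjective, `z^(n²) ∈ Iₙ (Iₙ^(n-1) ∩ (z))` would give some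
`f ∈ Iₙ^(n-1) ∩ (z)` with `ε f = T^(n(n-1))`. But `δ f = 0` as `δ z = 0`, so the coefficient of
`T^(n(n-1))` in `ε f` vanishes.
-/

open MvPolynomial

theorem Ideal.span_triple_pow_le {A : Type*} [CommSemiring A] (u v w : A) (m : ℕ) :
    Ideal.span {u, v, w} ^ m ≤
      Ideal.span {f | ∃ a b c, a + b + c = m ∧ f = u ^ a * v ^ b * w ^ c} := by
  induction m with
  | zero =>
    rw [pow_zero, Ideal.one_eq_top, top_le_iff, Ideal.eq_top_iff_one]
    exact Ideal.subset_span ⟨0, 0, 0, rfl, by simp⟩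
  | succ m ih =>
    rw [pow_succ]
    refine (Ideal.mul_mono_left ih).trans ?_
    rw [Ideal.span_mul_span', Ideal.span_le]
    rintro _ ⟨_, ⟨a, b, c, rfl, rfl⟩, g, hg, rfl⟩
    apply Ideal.subset_span
    rcases hg with rfl | rfl | rfl
    · exact ⟨a + 1, b, c, by omega, by ring⟩
    · exact ⟨a, b + 1, c, by omega, by ring⟩
    · exact ⟨a, b, c + 1, by omega, by ring⟩

namespace QuotXZ

variable {k : Type*} [Field k]

local notation "R" => MvPolynomial (Fin 3) k ⧸ Ideal.span {(X 0 : MvPolynomial (Fin 3) k) * X 2}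

local notation "π" => Ideal.Quotient.mk (Ideal.span {(X 0 : MvPolynomial (Fin 3) k) * X 2})

noncomputable def lift {A : Type*} [CommRing A] [Algebra k A] (v : Fin 3 → A)
    (hv : v 0 * v 2 = 0) : R →+* A :=
  Ideal.Quotient.lift _ (aeval v).toRingHom fun p hp => by
    obtain ⟨q, rfl⟩ := Ideal.mem_span_singleton'.mp hp
    simp [hv]

@[simp]
theorem lift_mk {A : Type*} [CommRing A] [Algebra k A] (v : Fin 3 → A) (hv : v 0 * v 2 = 0)
    (p : MvPolynomial (Fin 3) k) : lift v hv (π p) = aeval v p :=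
  rfl

noncomputable def toZAxis : R →+* Polynomial k :=
  lift ![0, 0, Polynomial.X] (by simp)

noncomputable def toXYPlane : R →+* MvPolynomial (Fin 2) k :=
  lift ![X 0, X 1, 0] (by simp)

theorem coeff_toZAxis_zero (r : R) : (toZAxis r).coeff 0 = coeff 0 (toXYPlane r) := by
  suffices (Polynomial.constantCoeff.comp toZAxis : R →+* k) = constantCoeff.comp toXYPlane from
    congr($this r)
  refine Ideal.Quotient.ringHom_ext (MvPolynomial.ringHom_ext (fun a => ?_) fun i => ?_)
  · simp [toZAxis, toXYPlane]
  · fin_cases i <;> simp [toZAxis, toXYPlane]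

noncomputable def genIdeal (n : ℕ) : Ideal R :=
  Ideal.span {π (X 0) ^ n, π (X 1) ^ n, π (X 0) ^ (n - 1) * π (X 1) + π (X 2) ^ n}

theorem toZAxis_genMonomial {n : ℕ} (hn : n ≠ 0) (a b c : ℕ) :
    toZAxis ((π (X 0) ^ n) ^ a * (π (X 1) ^ n) ^ b *
        (π (X 0) ^ (n - 1) * π (X 1) + π (X 2) ^ n) ^ c) =
      if a = 0 ∧ b = 0 then Polynomial.X ^ (n * c) else 0 := by
  split_ifs with hab
  · obtain ⟨rfl, rfl⟩ := hab
    simp [toZAxis, pow_mul]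
  · rw [not_and_or] at hab
    rcases hab with ha | hb <;> simp [toZAxis, *]

theorem toXYPlane_genMonomial {n : ℕ} (hn : n ≠ 0) (a b c : ℕ) :
    toXYPlane ((π (X 0) ^ n) ^ a * (π (X 1) ^ n) ^ b *
        (π (X 0) ^ (n - 1) * π (X 1) + π (X 2) ^ n) ^ c) =
      monomial (Finsupp.single 0 (n * a + (n - 1) * c) + Finsupp.single 1 (n * b + c)) 1 := by
  rw [monomial_single_add, ← X_pow_eq_monomial]
  simp [toXYPlane, hn]
  ring

-- `δ (xⁿᵃ yⁿᵇ gᶜ) = X^(na+(n-1)c) Y^(nb+c)` divides `X^((n-1)m) Y^m`, `m = a + b + c < n`,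
-- only for `a = b = 0`.
theorem exponents_eq_zero_of_le {n a b c : ℕ} (habc : a + b + c < n)
    (h₀ : n * a + (n - 1) * c ≤ (n - 1) * (a + b + c)) (h₁ : n * b + c ≤ a + b + c) :
    a = 0 ∧ b = 0 := by
  obtain ⟨n, rfl⟩ := Nat.exists_eq_add_one_of_ne_zero (by omega : n ≠ 0)
  simp only [Nat.add_sub_cancel] at h₀
  obtain rfl : a = n * b := by nlinarith
  obtain rfl : b = 0 := by nlinarith
  simp

theorem coeff_toZAxis_eq_coeff_toXYPlane {n m : ℕ} (hm : m < n) {f : R}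
    (hf : f ∈ genIdeal n ^ m) :
    (toZAxis f).coeff (n * m) =
      coeff (Finsupp.single 0 ((n - 1) * m) + Finsupp.single 1 m) (toXYPlane f) := by
  have hn : n ≠ 0 := by omega
  suffices ∀ p ∈ Ideal.span {f | ∃ a b c, a + b + c = m ∧ f = (π (X 0) ^ n) ^ a *
      (π (X 1) ^ n) ^ b * (π (X 0) ^ (n - 1) * π (X 1) + π (X 2) ^ n) ^ c}, ∀ r : R,
      (toZAxis (r * p)).coeff (n * m) =
        coeff (Finsupp.single 0 ((n - 1) * m) + Finsupp.single 1 m) (toXYPlane (r * p)) by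
    simpa using this f (Ideal.span_triple_pow_le _ _ _ m hf) 1
  intro p hp
  induction hp using Submodule.span_induction with
  | mem p hp =>
    obtain ⟨a, b, c, rfl, rfl⟩ := hp
    intro r
    rw [map_mul toZAxis r, map_mul toXYPlane r, toZAxis_genMonomial hn,
      toXYPlane_genMonomial hn, coeff_mul_monomial']
    by_cases hab : a = 0 ∧ b = 0
    · obtain ⟨rfl, rfl⟩ := hab
      simp [Polynomial.coeff_mul_X_pow', coeff_toZAxis_zero]
    · rw [if_neg hab, if_neg]
      · simp
      · intro hle
        exact hab (exponents_eq_zero_of_le hm (by simpa using hle 0) (by simpa using hle 1))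
  | zero => simp
  | add p q _ _ hp hq =>
    intro r
    rw [mul_add, map_add, map_add, Polynomial.coeff_add, coeff_add, hp, hq]
  | smul s p _ hp => intro r; simpa [mul_assoc] using hp (r * s)

theorem toZAxis_surjective : Function.Surjective (toZAxis (k := k)) := by
  intro p
  induction p using Polynomial.induction_on' with
  | add p q hp hq =>
    obtain ⟨f, rfl⟩ := hp
    obtain ⟨g, rfl⟩ := hq
    exact ⟨f + g, map_add _ _ _⟩
  | monomial d a =>
    exact ⟨π (C a * X 2 ^ d), by simp [toZAxis, Polynomial.C_mul_X_pow_eq_monomial]⟩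

theorem map_toZAxis_genIdeal {n : ℕ} (hn : n ≠ 0) :
    (genIdeal n).map (toZAxis (k := k)) = Ideal.span {Polynomial.X ^ n} := by
  simp [genIdeal, Ideal.map_span, Set.image_insert_eq, toZAxis, hn]

end QuotXZ

open QuotXZ

/-- Example (dimension two, reduced): in `R = k[X,Y,Z]/(XZ)`, with
`I_n = (xⁿ, yⁿ, x^{n-1}y + zⁿ)` and `J = (z)`, the element `z^{n²}` does not lie in
`I_n·(I_n^{n-1} ∩ J)` for `n ≥ 1`. -/
theorem stmt15 (k : Type*) [Field k]
    (x y z : MvPolynomial (Fin 3) k ⧸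
      Ideal.span {(MvPolynomial.X 0 : MvPolynomial (Fin 3) k) * MvPolynomial.X 2})
    (hx : x = Ideal.Quotient.mk _ (MvPolynomial.X 0))
    (hy : y = Ideal.Quotient.mk _ (MvPolynomial.X 1))
    (hz : z = Ideal.Quotient.mk _ (MvPolynomial.X 2))
    (n : ℕ) (hn : 1 ≤ n) :
    z ^ (n ^ 2) ∉
      Ideal.span {x ^ n, y ^ n, x ^ (n - 1) * y + z ^ n} *
        (Ideal.span {x ^ n, y ^ n, x ^ (n - 1) * y + z ^ n} ^ (n - 1) ⊓ Ideal.span {z}) := by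
  subst hx hy hz
  change _ ∉ genIdeal n * (genIdeal n ^ (n - 1) ⊓ _)
  intro h
  have hn0 : n ≠ 0 := Nat.one_le_iff_ne_zero.mp hn
  have hmap := Ideal.mem_map_of_mem toZAxis h
  rw [Ideal.map_mul, map_toZAxis_genIdeal hn0, Ideal.mem_span_singleton_mul] at hmap
  obtain ⟨p, hp, hXp⟩ := hmap
  have hp_eq : p = Polynomial.X ^ (n * (n - 1)) := by
    refine mul_left_cancel₀ (pow_ne_zero n Polynomial.X_ne_zero) ?_
    have hexp : n + n * (n - 1) = n ^ 2 := by
      obtain ⟨m, rfl⟩ := Nat.exists_eq_add_one_of_ne_zero hn0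
      simp only [Nat.add_sub_cancel]
      ring
    rw [hXp, ← pow_add, hexp]
    simp [toZAxis]
  obtain ⟨f, ⟨hfI, hfz⟩, rfl⟩ := (Ideal.mem_map_iff_of_surjective _ toZAxis_surjective).mp hp
  have hf_XY : toXYPlane f = 0 := by
    obtain ⟨g, rfl⟩ := Ideal.mem_span_singleton'.mp hfz
    simp [toXYPlane]
  simpa [hp_eq, hf_XY] using coeff_toZAxis_eq_coeff_toXYPlane (by omega : n - 1 < n) hfI
end

section
/- Let k be a field, let R = k[X, Y, Z]/(XZ) with x, y, z the images of X, Y, Z, and let J = (z). Then the pair (J, R) fails the strong uniform Artin–Rees property: for every non-negative integer h there exist an ideal I of R and an integer n ≥ h such that Iⁿ ∩ J ≠ I^{n−h}(I^h ∩ J). In fact, for every n ≥ 1 the ideal I_n = (xⁿ, yⁿ, x^{n−1}y + zⁿ) satisfies I_nⁿ ∩ J ≠ I_n·(I_n^{n−1} ∩ J). -/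
set_option synthInstance.maxHeartbeats 1000000
set_option maxHeartbeats 1000000

open MvPolynomial

namespace Stmt16Aux

variable (k : Type*) [Field k]

abbrev PP := MvPolynomial (Fin 3) k

noncomputable abbrev QQ : Ideal (PP k) := Ideal.span {(X 0 : PP k) * X 2}

abbrev RR := PP k ⧸ QQ k

variable {k}

/-- coefficient of a pure-Z monomial, descended to the quotient -/
noncomputable def cfZ (j : ℕ) (w : RR k) : k :=
  Quotient.liftOn' w (fun Q => coeff (Finsupp.single 2 j) Q) (by
    intro a b h
    rw [Submodule.quotientRel_def] at h
    obtain ⟨g, hg⟩ := Ideal.mem_span_singleton'.mp h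
    have h2 : coeff (Finsupp.single 2 j) (a - b) = 0 := by
      rw [← hg]
      have : g * (X 0 * X 2) = X 0 * (g * X 2) := by ring
      rw [this, coeff_X_mul']
      have : (0 : Fin 3) ∉ (Finsupp.single (2 : Fin 3) j).support := by
        simp [Finsupp.single_apply]
      simp [this]
    rw [MvPolynomial.coeff_sub] at h2
    exact sub_eq_zero.mp h2 )

noncomputable def cfXY (α β : ℕ) (w : RR k) : k :=
  Quotient.liftOn' w (fun Q => coeff (Finsupp.single 0 α + Finsupp.single 1 β) Q) (by
    intro a b h
    rw [Submodule.quotientRel_def] at h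
    obtain ⟨g, hg⟩ := Ideal.mem_span_singleton'.mp h
    have h2 : coeff (Finsupp.single 0 α + Finsupp.single 1 β) (a - b) = 0 := by
      rw [← hg]
      have : g * (X 0 * X 2) = X 2 * (g * X 0) := by ring
      rw [this, coeff_X_mul']
      have : (2 : Fin 3) ∉ (Finsupp.single (0:Fin 3) α + Finsupp.single 1 β).support := by
        simp [Finsupp.single_apply]
      simp [this]
    rw [MvPolynomial.coeff_sub] at h2
    exact sub_eq_zero.mp h2 )

@[simp] theorem cfZ_mk (j : ℕ) (Q : PP k) :
    cfZ j (Ideal.Quotient.mk (QQ k) Q) = coeff (Finsupp.single 2 j) Q := rfl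

@[simp] theorem cfXY_mk (α β : ℕ) (Q : PP k) :
    cfXY α β (Ideal.Quotient.mk (QQ k) Q) =
      coeff (Finsupp.single 0 α + Finsupp.single 1 β) Q := rfl

theorem cfZ_add (j : ℕ) (u v : RR k) : cfZ j (u + v) = cfZ j u + cfZ j v := by
  obtain ⟨a, rfl⟩ := Ideal.Quotient.mk_surjective u
  obtain ⟨b, rfl⟩ := Ideal.Quotient.mk_surjective v
  rw [← map_add, cfZ_mk, cfZ_mk, cfZ_mk, coeff_add]

theorem cfXY_add (α β : ℕ) (u v : RR k) :
    cfXY α β (u + v) = cfXY α β u + cfXY α β v := by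
  obtain ⟨a, rfl⟩ := Ideal.Quotient.mk_surjective u
  obtain ⟨b, rfl⟩ := Ideal.Quotient.mk_surjective v
  rw [← map_add, cfXY_mk, cfXY_mk, cfXY_mk, coeff_add]


variable (k) in
noncomputable def xx : RR k := Ideal.Quotient.mk (QQ k) (X 0)
variable (k) in
noncomputable def yy : RR k := Ideal.Quotient.mk (QQ k) (X 1)
variable (k) in
noncomputable def zz : RR k := Ideal.Quotient.mk (QQ k) (X 2)

theorem single_sub_single (i : Fin 3) (a b : ℕ) :
    Finsupp.single i a - Finsupp.single i b = Finsupp.single i (a - b) := by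
  ext t
  by_cases h : t = i <;> simp [Finsupp.tsub_apply, Finsupp.single_apply, h]

theorem addsingle_sub_single0 (α β s : ℕ) :
    (Finsupp.single (0 : Fin 3) α + Finsupp.single 1 β) - Finsupp.single 0 s =
      Finsupp.single (0 : Fin 3) (α - s) + Finsupp.single 1 β := by
  ext t
  fin_cases t <;> simp [Finsupp.tsub_apply, Finsupp.single_apply]

theorem addsingle_sub_single1 (α β s : ℕ) :
    (Finsupp.single (0 : Fin 3) α + Finsupp.single 1 β) - Finsupp.single 1 s =
      Finsupp.single (0 : Fin 3) α + Finsupp.single 1 (β - s) := by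
  ext t
  fin_cases t <;> simp [Finsupp.tsub_apply, Finsupp.single_apply]

theorem cfZ_xpow_mul (j s : ℕ) (hs : 1 ≤ s) (u : RR k) : cfZ j (xx k ^ s * u) = 0 := by
  obtain ⟨Q, rfl⟩ := Ideal.Quotient.mk_surjective u
  rw [show xx k ^ s * Ideal.Quotient.mk (QQ k) Q = Ideal.Quotient.mk (QQ k) (X 0 ^ s * Q) by
    rw [map_mul, map_pow]; rfl]
  rw [cfZ_mk, X_pow_eq_monomial, coeff_monomial_mul']
  rw [if_neg]
  intro hle
  have := (Finsupp.single_le_iff).mp hle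
  simp [Finsupp.single_apply] at this
  omega

theorem cfZ_ypow_mul (j s : ℕ) (hs : 1 ≤ s) (u : RR k) : cfZ j (yy k ^ s * u) = 0 := by
  obtain ⟨Q, rfl⟩ := Ideal.Quotient.mk_surjective u
  rw [show yy k ^ s * Ideal.Quotient.mk (QQ k) Q = Ideal.Quotient.mk (QQ k) (X 1 ^ s * Q) by
    rw [map_mul, map_pow]; rfl]
  rw [cfZ_mk, X_pow_eq_monomial, coeff_monomial_mul']
  rw [if_neg]
  intro hle
  have := (Finsupp.single_le_iff).mp hle
  simp [Finsupp.single_apply] at this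
  omega

theorem cfZ_zpow_mul (j s : ℕ) (hs : s ≤ j) (u : RR k) :
    cfZ j (zz k ^ s * u) = cfZ (j - s) u := by
  obtain ⟨Q, rfl⟩ := Ideal.Quotient.mk_surjective u
  rw [show zz k ^ s * Ideal.Quotient.mk (QQ k) Q = Ideal.Quotient.mk (QQ k) (X 2 ^ s * Q) by
    rw [map_mul, map_pow]; rfl]
  rw [cfZ_mk, cfZ_mk, X_pow_eq_monomial, coeff_monomial_mul']
  rw [if_pos, single_sub_single, one_mul]
  exact Finsupp.single_le_iff.mpr (by simp [Finsupp.single_apply, hs])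

theorem cfZ_zpow_mul_lt (j s : ℕ) (hs : j < s) (u : RR k) : cfZ j (zz k ^ s * u) = 0 := by
  obtain ⟨Q, rfl⟩ := Ideal.Quotient.mk_surjective u
  rw [show zz k ^ s * Ideal.Quotient.mk (QQ k) Q = Ideal.Quotient.mk (QQ k) (X 2 ^ s * Q) by
    rw [map_mul, map_pow]; rfl]
  rw [cfZ_mk, X_pow_eq_monomial, coeff_monomial_mul']
  rw [if_neg]
  intro hle
  have := (Finsupp.single_le_iff).mp hle
  simp [Finsupp.single_apply] at this
  omega

theorem cfXY_zpow_mul (α β s : ℕ) (hs : 1 ≤ s) (u : RR k) : cfXY α β (zz k ^ s * u) = 0 := by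
  obtain ⟨Q, rfl⟩ := Ideal.Quotient.mk_surjective u
  rw [show zz k ^ s * Ideal.Quotient.mk (QQ k) Q = Ideal.Quotient.mk (QQ k) (X 2 ^ s * Q) by
    rw [map_mul, map_pow]; rfl]
  rw [cfXY_mk, X_pow_eq_monomial, coeff_monomial_mul']
  rw [if_neg]
  intro hle
  have := (Finsupp.single_le_iff).mp hle
  simp [Finsupp.single_apply] at this
  omega

theorem cfXY_xpow_mul (α β s : ℕ) (hs : s ≤ α) (u : RR k) :
    cfXY α β (xx k ^ s * u) = cfXY (α - s) β u := by
  obtain ⟨Q, rfl⟩ := Ideal.Quotient.mk_surjective u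
  rw [show xx k ^ s * Ideal.Quotient.mk (QQ k) Q = Ideal.Quotient.mk (QQ k) (X 0 ^ s * Q) by
    rw [map_mul, map_pow]; rfl]
  rw [cfXY_mk, cfXY_mk, X_pow_eq_monomial, coeff_monomial_mul']
  rw [if_pos, addsingle_sub_single0, one_mul]
  exact Finsupp.single_le_iff.mpr (by simp [Finsupp.single_apply, hs])

theorem cfXY_xpow_mul_lt (α β s : ℕ) (hs : α < s) (u : RR k) :
    cfXY α β (xx k ^ s * u) = 0 := by
  obtain ⟨Q, rfl⟩ := Ideal.Quotient.mk_surjective u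
  rw [show xx k ^ s * Ideal.Quotient.mk (QQ k) Q = Ideal.Quotient.mk (QQ k) (X 0 ^ s * Q) by
    rw [map_mul, map_pow]; rfl]
  rw [cfXY_mk, X_pow_eq_monomial, coeff_monomial_mul']
  rw [if_neg]
  intro hle
  have := (Finsupp.single_le_iff).mp hle
  simp [Finsupp.single_apply] at this
  omega

theorem cfXY_ypow_mul (α β s : ℕ) (hs : s ≤ β) (u : RR k) :
    cfXY α β (yy k ^ s * u) = cfXY α (β - s) u := by
  obtain ⟨Q, rfl⟩ := Ideal.Quotient.mk_surjective u
  rw [show yy k ^ s * Ideal.Quotient.mk (QQ k) Q = Ideal.Quotient.mk (QQ k) (X 1 ^ s * Q) by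
    rw [map_mul, map_pow]; rfl]
  rw [cfXY_mk, cfXY_mk, X_pow_eq_monomial, coeff_monomial_mul']
  rw [if_pos, addsingle_sub_single1, one_mul]
  exact Finsupp.single_le_iff.mpr (by simp [Finsupp.single_apply, hs])

theorem cfXY_ypow_mul_lt (α β s : ℕ) (hs : β < s) (u : RR k) :
    cfXY α β (yy k ^ s * u) = 0 := by
  obtain ⟨Q, rfl⟩ := Ideal.Quotient.mk_surjective u
  rw [show yy k ^ s * Ideal.Quotient.mk (QQ k) Q = Ideal.Quotient.mk (QQ k) (X 1 ^ s * Q) by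
    rw [map_mul, map_pow]; rfl]
  rw [cfXY_mk, X_pow_eq_monomial, coeff_monomial_mul']
  rw [if_neg]
  intro hle
  have := (Finsupp.single_le_iff).mp hle
  simp [Finsupp.single_apply] at this
  omega


theorem cfZ_zero_eq (w : RR k) : cfZ 0 w = cfXY 0 0 w := by
  obtain ⟨Q, rfl⟩ := Ideal.Quotient.mk_surjective w
  rw [cfZ_mk, cfXY_mk]
  congr 1
  ext t
  simp [Finsupp.single_apply]

theorem mem_span_triple {A : Type*} [CommRing A] {u g1 g2 g3 : A}
    (h : u ∈ Ideal.span {g1, g2, g3}) : ∃ a b c, u = a * g1 + b * g2 + c * g3 := by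
  rw [show ({g1, g2, g3} : Set A) = insert g1 (insert g2 {g3}) from rfl] at h
  rw [Ideal.mem_span_insert] at h
  obtain ⟨a, w1, hw1, rfl⟩ := h
  rw [Ideal.mem_span_insert] at hw1
  obtain ⟨b, w2, hw2, rfl⟩ := hw1
  rw [Ideal.mem_span_singleton'] at hw2
  obtain ⟨c, rfl⟩ := hw2
  exact ⟨a, b, c, by ring⟩

theorem add_pow_of_mul_eq_zero {A : Type*} [CommRing A] {a b : A} (h : a * b = 0) :
    ∀ m : ℕ, 1 ≤ m → (a + b) ^ m = a ^ m + b ^ m := by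
  intro m
  induction m with
  | zero => omega
  | succ t ih =>
    intro _
    rcases Nat.eq_zero_or_pos t with ht | ht
    · subst ht; simp
    · have := ih ht
      rw [pow_succ, this]
      have ha : a ^ t * b = 0 := by
        obtain ⟨r, rfl⟩ : ∃ r, t = r + 1 := ⟨t - 1, by omega⟩
        calc a ^ (r + 1) * b = a ^ r * (a * b) := by ring
        _ = 0 := by rw [h, mul_zero]
      have hb : b ^ t * a = 0 := by
        obtain ⟨r, rfl⟩ : ∃ r, t = r + 1 := ⟨t - 1, by omega⟩
        calc b ^ (r + 1) * a = b ^ r * (a * b) := by ring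
        _ = 0 := by rw [h, mul_zero]
      calc (a ^ t + b ^ t) * (a + b)
          = a ^ (t + 1) + b ^ (t + 1) + (a ^ t * b + b ^ t * a) := by ring
        _ = a ^ (t + 1) + b ^ (t + 1) := by rw [ha, hb]; ring


theorem cfZ_xy_mul (j s : ℕ) (u : RR k) : cfZ j (xx k ^ s * (yy k ^ 1 * u)) = 0 := by
  rcases Nat.eq_zero_or_pos s with rfl | hs
  · simp only [pow_zero, one_mul]
    exact cfZ_ypow_mul _ _ le_rfl _
  · exact cfZ_xpow_mul _ _ hs _

theorem key (n : ℕ) (hn : 1 ≤ n) :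
    ∀ m : ℕ, m < n →
      ∀ w ∈ (Ideal.span {xx k ^ n, yy k ^ n, xx k ^ (n-1) * yy k + zz k ^ n} : Ideal (RR k)) ^ m,
        (∀ j, j < n * m → cfZ j w = 0) ∧
        (∀ α β : ℕ,
            (∀ a b c : ℕ, a + b + c = m → ¬(n*a + (n-1)*c ≤ α ∧ n*b + c ≤ β)) →
            cfXY α β w = 0) ∧
        cfZ (n * m) w = cfXY ((n-1) * m) m w := by
  intro m
  induction m with
  | zero =>
    intro _ w _
    refine ⟨fun j hj => absurd hj (by omega), fun α β hcond => ?_, ?_⟩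
    · exact absurd (⟨by simp, by simp⟩ : n*0 + (n-1)*0 ≤ α ∧ n*0 + 0 ≤ β) (hcond 0 0 0 rfl)
    · simpa using cfZ_zero_eq w
  | succ m ih =>
    intro hm1 w hw
    have hm : m < n := by omega
    rw [pow_succ (M := Ideal (RR k))] at hw
    refine Submodule.mul_induction_on hw ?_ ?_
    · intro v hv u hu
      obtain ⟨a, b, c, rfl⟩ := mem_span_triple hu
      have hva := Ideal.mul_mem_left _ a hv
      have hvb := Ideal.mul_mem_left _ b hv
      have hvc := Ideal.mul_mem_left _ c hv
      obtain ⟨h1Z, h1XY, h1E⟩ := ih hm (a * v) hva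
      obtain ⟨h2Z, h2XY, h2E⟩ := ih hm (b * v) hvb
      obtain ⟨h3Z, h3XY, h3E⟩ := ih hm (c * v) hvc
      have hrw : v * (a * xx k ^ n + b * yy k ^ n + c * (xx k ^ (n-1) * yy k + zz k ^ n)) =
          xx k ^ n * (a * v) + yy k ^ n * (b * v) +
            (xx k ^ (n-1) * (yy k ^ 1 * (c * v)) + zz k ^ n * (c * v)) := by ring
      rw [hrw]
      refine ⟨?_, ?_, ?_⟩
      · -- (i) low pure-Z coefficients vanish
        intro j hj
        rw [cfZ_add, cfZ_add, cfZ_add, cfZ_xpow_mul j n hn _, cfZ_ypow_mul j n hn _,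
          cfZ_xy_mul]
        have hzero : cfZ j (zz k ^ n * (c * v)) = 0 := by
          rcases le_or_gt n j with h | h
          · rw [cfZ_zpow_mul j n h]
            apply h3Z
            have e : n * (m + 1) = n * m + n := by ring
            omega
          · rw [cfZ_zpow_mul_lt j n h]
        rw [hzero]; ring
      · -- (ii) XY-coefficients outside the staircase vanish
        intro α β hcond
        rw [cfXY_add, cfXY_add, cfXY_add]
        have t1 : cfXY α β (xx k ^ n * (a * v)) = 0 := by
          rcases le_or_gt n α with h | h
          · rw [cfXY_xpow_mul _ _ _ h]
            apply h1XY
            intro a' b' c' habc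
            rintro ⟨q1, q2⟩
            apply hcond (a' + 1) b' c' (by omega)
            have e : n * (a' + 1) = n * a' + n := by ring
            refine ⟨?_, q2⟩
            set A := n * a'; set C := (n-1) * c'
            omega
          · rw [cfXY_xpow_mul_lt _ _ _ h]
        have t2 : cfXY α β (yy k ^ n * (b * v)) = 0 := by
          rcases le_or_gt n β with h | h
          · rw [cfXY_ypow_mul _ _ _ h]
            apply h2XY
            intro a' b' c' habc
            rintro ⟨q1, q2⟩
            apply hcond a' (b' + 1) c' (by omega)
            have e : n * (b' + 1) = n * b' + n := by ring
            refine ⟨q1, ?_⟩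
            set B := n * b'
            omega
          · rw [cfXY_ypow_mul_lt _ _ _ h]
        have t3 : cfXY α β (xx k ^ (n-1) * (yy k ^ 1 * (c * v))) = 0 := by
          rcases le_or_gt (n-1) α with h | h
          · rcases le_or_gt 1 β with h' | h'
            · rw [cfXY_xpow_mul _ _ _ h, cfXY_ypow_mul _ _ _ h']
              apply h3XY
              intro a' b' c' habc
              rintro ⟨q1, q2⟩
              apply hcond a' b' (c' + 1) (by omega)
              have e : (n-1) * (c' + 1) = (n-1) * c' + (n-1) := by ring
              constructor
              · set A := n * a'; set C := (n-1) * c'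
                omega
              · set B := n * b'
                omega
            · rw [cfXY_xpow_mul _ _ _ h, cfXY_ypow_mul_lt _ _ _ h']
          · rw [cfXY_xpow_mul_lt _ _ _ h]
        have t4 : cfXY α β (zz k ^ n * (c * v)) = 0 := cfXY_zpow_mul _ _ n hn _
        rw [t1, t2, t3, t4]; ring
      · -- (iii) the diagonal identity
        have LHS3 : cfZ (n * (m+1)) (zz k ^ n * (c * v)) = cfXY ((n-1) * m) m (c * v) := by
          have hle : n ≤ n * (m + 1) := Nat.le_mul_of_pos_right n (by omega)
          rw [cfZ_zpow_mul _ n hle]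
          have e : n * (m + 1) = n * m + n := by ring
          have e2 : n * (m + 1) - n = n * m := by omega
          rw [e2, h3E]
        have R1 : cfXY ((n-1) * (m+1)) (m+1) (xx k ^ n * (a * v)) = 0 := by
          rcases le_or_gt n ((n-1) * (m+1)) with h | h
          · rw [cfXY_xpow_mul _ _ _ h]
            apply h1XY
            intro a' b' c' habc
            rintro ⟨q1, q2⟩
            rcases b' with _ | b'' 
            · have e3 : (n-1) * (m+1) = (n-1) * a' + (n-1) * c' + (n-1) := by
                have : m = a' + c' := by omega
                rw [this]; ring
              have e4 : n * a' = (n-1) * a' + a' := by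
                have h' : n - 1 + 1 = n := by omega
                calc n * a' = ((n-1) + 1) * a' := by rw [h']
                  _ = (n-1) * a' + a' := by ring
              simp only [Nat.mul_zero, Nat.zero_add] at q2
              set A0 := (n-1) * a'; set C0 := (n-1) * c'
              omega
            · have e5 : n * (b'' + 1) = n * b'' + n := by ring
              set B := n * b''
              omega
          · rw [cfXY_xpow_mul_lt _ _ _ h]
        have R2 : cfXY ((n-1) * (m+1)) (m+1) (yy k ^ n * (b * v)) = 0 :=
          cfXY_ypow_mul_lt _ _ _ (by omega) _
        have R3 : cfXY ((n-1) * (m+1)) (m+1) (xx k ^ (n-1) * (yy k ^ 1 * (c * v))) =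
            cfXY ((n-1) * m) m (c * v) := by
          have hle : (n-1) ≤ (n-1) * (m+1) := Nat.le_mul_of_pos_right _ (by omega)
          rw [cfXY_xpow_mul _ _ _ hle, cfXY_ypow_mul _ _ _ (by omega)]
          have e : (n-1) * (m+1) = (n-1) * m + (n-1) := by ring
          have e2 : (n-1) * (m+1) - (n-1) = (n-1) * m := by omega
          rw [e2]
          norm_num
        rw [cfZ_add, cfZ_add, cfZ_add, cfXY_add, cfXY_add, cfXY_add]
        rw [cfZ_xpow_mul _ n hn _, cfZ_ypow_mul _ n hn _, cfZ_xy_mul, LHS3,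
          R1, R2, R3, cfXY_zpow_mul _ _ n hn _]
        ring
    · intro w1 w2 hw1 hw2
      refine ⟨fun j hj => ?_, fun α β hc => ?_, ?_⟩
      · rw [cfZ_add, hw1.1 j hj, hw2.1 j hj, add_zero]
      · rw [cfXY_add, hw1.2.1 α β hc, hw2.2.1 α β hc, add_zero]
      · rw [cfZ_add, cfXY_add, hw1.2.2, hw2.2.2]


theorem endgame (n : ℕ) (hn : 1 ≤ n) (w : RR k)
    (hw : w ∈ (Ideal.span {xx k ^ n, yy k ^ n, xx k ^ (n-1) * yy k + zz k ^ n} : Ideal (RR k))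
        ^ (n-1) ⊓ Ideal.span {zz k}) :
    cfZ (n * (n-1)) w = 0 := by
  obtain ⟨hw1, hw2⟩ := hw
  rw [(key n hn (n-1) (by omega) w hw1).2.2]
  obtain ⟨g, hg⟩ := Ideal.mem_span_singleton'.mp hw2
  rw [← hg, show g * zz k = zz k ^ 1 * g by ring]
  exact cfXY_zpow_mul _ _ 1 le_rfl _

theorem notmem (n : ℕ) (hn : 1 ≤ n) :
    zz k ^ (n*n) ∉
      Ideal.span {xx k ^ n, yy k ^ n, xx k ^ (n-1) * yy k + zz k ^ n} *
        ((Ideal.span {xx k ^ n, yy k ^ n, xx k ^ (n-1) * yy k + zz k ^ n} : Ideal (RR k))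
            ^ (n-1) ⊓ Ideal.span {zz k}) := by
  intro hmem
  have hzero : cfZ (n*n) (zz k ^ (n*n)) = 0 := by
    refine Submodule.mul_induction_on hmem ?_ ?_
    · intro u hu v hv
      obtain ⟨a, b, c, rfl⟩ := mem_span_triple hu
      have hrw : (a * xx k ^ n + b * yy k ^ n + c * (xx k ^ (n-1) * yy k + zz k ^ n)) * v =
          xx k ^ n * (a * v) + yy k ^ n * (b * v) +
            (xx k ^ (n-1) * (yy k ^ 1 * (c * v)) + zz k ^ n * (c * v)) := by ring
      rw [hrw, cfZ_add, cfZ_add, cfZ_add, cfZ_xpow_mul _ n hn _, cfZ_ypow_mul _ n hn _,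
        cfZ_xy_mul]
      have hlast : cfZ (n*n) (zz k ^ n * (c * v)) = 0 := by
        rw [cfZ_zpow_mul _ n (Nat.le_mul_of_pos_right n (by omega)) _]
        have e : n * (n-1) + n = n * n := by
          have h' : n - 1 + 1 = n := by omega
          calc n * (n-1) + n = n * ((n-1) + 1) := by ring
            _ = n * n := by rw [h']
        have e2 : n * n - n = n * (n-1) := by omega
        rw [e2]
        exact endgame n hn _ (Ideal.mul_mem_left _ c hv)
      rw [hlast]; ring
    · intro p q hp hq
      rw [cfZ_add, hp, hq, add_zero]
  have hone : cfZ (n*n) (zz k ^ (n*n)) = 1 := by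
    rw [show zz k ^ (n*n) = Ideal.Quotient.mk (QQ k) (X 2 ^ (n*n)) by rw [map_pow]; rfl]
    rw [cfZ_mk, X_pow_eq_monomial]
    simp [coeff_monomial]
  rw [hone] at hzero
  exact one_ne_zero hzero

theorem zmem (n : ℕ) (hn : 1 ≤ n) :
    zz k ^ (n*n) ∈
      (Ideal.span {xx k ^ n, yy k ^ n, xx k ^ (n-1) * yy k + zz k ^ n} : Ideal (RR k)) ^ n ⊓
        Ideal.span {zz k} := by
  have hg1 : xx k ^ n ∈ Ideal.span {xx k ^ n, yy k ^ n, xx k ^ (n-1) * yy k + zz k ^ n} :=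
    Ideal.subset_span (by simp)
  have hg2 : yy k ^ n ∈ Ideal.span {xx k ^ n, yy k ^ n, xx k ^ (n-1) * yy k + zz k ^ n} :=
    Ideal.subset_span (by simp)
  have hg3 : xx k ^ (n-1) * yy k + zz k ^ n ∈
      Ideal.span {xx k ^ n, yy k ^ n, xx k ^ (n-1) * yy k + zz k ^ n} :=
    Ideal.subset_span (by simp)
  constructor
  · -- the binomial identity
    have hF : (xx k ^ (n-1) * yy k + zz k ^ n) ^ n =
        xx k ^ ((n-1)*n) * yy k ^ n + zz k ^ (n*n) := by
      rcases eq_or_lt_of_le hn with h1 | h2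
      · rw [← h1]; simp
      · have hxz : xx k * zz k = 0 := by
          rw [show xx k * zz k = Ideal.Quotient.mk (QQ k) (X 0 * X 2) by rw [map_mul]; rfl]
          exact Ideal.Quotient.eq_zero_iff_mem.mpr (Ideal.subset_span rfl)
        have hab : (xx k ^ (n-1) * yy k) * zz k ^ n = 0 := by
          obtain ⟨t, rfl⟩ : ∃ t, n = t + 2 := ⟨n - 2, by omega⟩
          have e : (xx k ^ (t+2-1) * yy k) * zz k ^ (t+2) =
              (xx k * zz k) * (xx k ^ t * yy k * zz k ^ (t+1)) := by
            rw [show t+2-1 = t+1 from rfl]; ring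
          rw [e, hxz, zero_mul]
        rw [add_pow_of_mul_eq_zero hab n hn, mul_pow, ← pow_mul, ← pow_mul]
    have hFn : (xx k ^ (n-1) * yy k + zz k ^ n) ^ n ∈
        (Ideal.span {xx k ^ n, yy k ^ n, xx k ^ (n-1) * yy k + zz k ^ n} : Ideal (RR k)) ^ n :=
      Ideal.pow_mem_pow hg3 n
    have hxy : xx k ^ ((n-1)*n) * yy k ^ n ∈
        (Ideal.span {xx k ^ n, yy k ^ n, xx k ^ (n-1) * yy k + zz k ^ n} : Ideal (RR k)) ^ n := by
      have h1 := Ideal.pow_mem_pow hg1 (n-1)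
      have h2 := Ideal.mul_mem_mul h1 hg2
      rw [← pow_succ (M := Ideal (RR k)), show n - 1 + 1 = n by omega] at h2
      have e2 : xx k ^ ((n-1)*n) = (xx k ^ n) ^ (n-1) := by
        rw [← pow_mul, Nat.mul_comm]
      rw [e2]
      exact h2
    have hid : zz k ^ (n*n) =
        (xx k ^ (n-1) * yy k + zz k ^ n) ^ n - xx k ^ ((n-1)*n) * yy k ^ n := by
      rw [hF]; ring
    rw [hid]
    exact Ideal.sub_mem _ hFn hxy
  · exact Ideal.mem_span_singleton.mpr
      (dvd_pow_self _ (Nat.mul_ne_zero (by omega) (by omega)))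

theorem part2 (n : ℕ) (hn : 1 ≤ n) :
    (Ideal.span {xx k ^ n, yy k ^ n, xx k ^ (n-1) * yy k + zz k ^ n} : Ideal (RR k)) ^ n ⊓
        Ideal.span {zz k} ≠
      Ideal.span {xx k ^ n, yy k ^ n, xx k ^ (n-1) * yy k + zz k ^ n} *
        ((Ideal.span {xx k ^ n, yy k ^ n, xx k ^ (n-1) * yy k + zz k ^ n} : Ideal (RR k))
            ^ (n-1) ⊓ Ideal.span {zz k}) := by
  intro hEq
  have hmem := zmem n hn (k := k)
  rw [hEq] at hmem
  exact notmem n hn hmem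

end Stmt16Aux


/-- Example (dimension two, reduced): in `R = k[X,Y,Z]/(XZ)` with `J = (z)`, the pair
`(J, R)` fails the strong uniform Artin–Rees property; in fact for every `n ≥ 1` the ideal
`I_n = (xⁿ, yⁿ, x^{n-1}y + zⁿ)` satisfies `I_nⁿ ∩ J ≠ I_n·(I_n^{n-1} ∩ J)`. -/
theorem stmt16 (k : Type*) [Field k]
    (x y z : MvPolynomial (Fin 3) k ⧸
      Ideal.span {(MvPolynomial.X 0 : MvPolynomial (Fin 3) k) * MvPolynomial.X 2})
    (hx : x = Ideal.Quotient.mk _ (MvPolynomial.X 0))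
    (hy : y = Ideal.Quotient.mk _ (MvPolynomial.X 1))
    (hz : z = Ideal.Quotient.mk _ (MvPolynomial.X 2)) :
    (∀ h : ℕ, ∃ I : Ideal (MvPolynomial (Fin 3) k ⧸
        Ideal.span {(MvPolynomial.X 0 : MvPolynomial (Fin 3) k) * MvPolynomial.X 2}),
      ∃ n : ℕ, h ≤ n ∧
        I ^ n ⊓ Ideal.span {z} ≠ I ^ (n - h) * (I ^ h ⊓ Ideal.span {z})) ∧
    (∀ n : ℕ, 1 ≤ n →
      Ideal.span {x ^ n, y ^ n, x ^ (n - 1) * y + z ^ n} ^ n ⊓ Ideal.span {z} ≠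
        Ideal.span {x ^ n, y ^ n, x ^ (n - 1) * y + z ^ n} *
          (Ideal.span {x ^ n, y ^ n, x ^ (n - 1) * y + z ^ n} ^ (n - 1) ⊓ Ideal.span {z})) := by
  subst hx hy hz
  constructor
  · intro h
    refine ⟨Ideal.span {Stmt16Aux.xx k ^ (h+1), Stmt16Aux.yy k ^ (h+1),
        Stmt16Aux.xx k ^ ((h+1)-1) * Stmt16Aux.yy k + Stmt16Aux.zz k ^ (h+1)},
      h+1, by omega, ?_⟩
    rw [show h + 1 - h = 1 by omega, Submodule.pow_one]
    exact Stmt16Aux.part2 (k := k) (h+1) (by omega)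
  · intro n hn
    exact Stmt16Aux.part2 (k := k) n hn
end
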